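/- arXiv:0810.0184 — 3 statements merged into one kernel-verified Lean document; each statement's English description precedes it below -/
import Mathlib

section
/- For every n ∈ ℕ there is an isomorphism of ℂ-algebras C(2n+1) ≅ C(2n) × C(2n), the product of two copies of the even Clifford algebra. -/
/-- The quadratic form `Q_r` on `Fin r → ℂ` given by `Q_r v = ∑ i, (v i)^2`. -/
noncomputable def Qf (r : ℕ) : QuadraticForm ℂ (Fin r → ℂ) :=
  QuadraticMap.weightedSumSquares ℂ (fun _ : Fin r => (1 : ℂ))

/-- The complex Clifford algebra `C(r)` on `r` generators `ω_i = ι (e_i)`,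
satisfying `ω_i² = 1` and `ω_i ω_j = −ω_j ω_i` for `i ≠ j`. -/
noncomputable abbrev CliffordC (r : ℕ) := CliffordAlgebra (Qf r)

/-!
Write `C(2n+1)` as the Clifford algebra of `⟨1⟩ ⊥ Q` on `ℂ × ℂ^{2n}`, where `Q = Q_{2n}`, and let
`ω = i^(2n choose 2) ω₁ ⋯ ω_{2n} ∈ C(2n)` be the chirality element: it is even, squares to `1`
and anticommutes with every vector. Hence `(t, m) ↦ (ι m + t ω, ι m - t ω)` is compatible with the
quadratic form and lifts to `C(2n+1) → C(2n) × C(2n)`. Conversely, with `ε = ι (1, 0)`, the element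
`Ω = ω ε` of `C(2n+1)` is central (as `ω` is even, `ε` commutes with it) and `Ω² = 1`, so
`p = (1 + Ω) / 2` is a central idempotent and `(a, b) ↦ a p + b (1 - p)` is an algebra map
`C(2n) × C(2n) → C(2n+1)`. The two maps are mutually inverse, as one checks on generators:
`ω (p - (1 - p)) = ω Ω = ε`.
-/

section AnticommutingFamily

variable {A ι : Type*} [Ring A] [DecidableEq ι] {g : ι → A}

theorem mul_list_prod_map_of_anticommute (hg : Pairwise fun i j => g i * g j = -(g j * g i))
    (i : ι) (l : List ι) :
    g i * (l.map g).prod = (-1) ^ (l.length - l.count i) * ((l.map g).prod * g i) := by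
  induction l with
  | nil => simp
  | cons a t ih =>
    have hsign := ((Commute.neg_one_left (g a)).pow_left (t.length - t.count i)).symm
    simp only [List.map_cons, List.prod_cons, List.length_cons]
    by_cases ha : a = i
    · subst ha
      rw [List.count_cons_self, Nat.add_sub_add_right, mul_assoc (g a) _ (g a), ih,
        hsign.left_comm]
    · rw [List.count_cons_of_ne ha, Nat.sub_add_comm (List.count_le_length ..), pow_succ,
        ← mul_assoc, hg (Ne.symm ha), neg_mul, mul_assoc, ih, hsign.left_comm]
      simp only [mul_neg, mul_one, neg_mul, mul_assoc]

theorem list_prod_map_mul_self_of_anticommute (hg : Pairwise fun i j => g i * g j = -(g j * g i))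
    (hsq : ∀ i, g i * g i = 1) {l : List ι} (hl : l.Nodup) :
    (l.map g).prod * (l.map g).prod = (-1) ^ l.length.choose 2 := by
  induction l with
  | nil => simp
  | cons a t ih =>
    obtain ⟨hat, ht⟩ := List.nodup_cons.mp hl
    have hswap := mul_list_prod_map_of_anticommute hg a t
    rw [List.count_eq_zero_of_not_mem hat, Nat.sub_zero] at hswap
    simp only [List.map_cons, List.prod_cons, List.length_cons]
    nth_rewrite 1 [hswap]
    rw [mul_assoc, mul_assoc (t.map g).prod, ← mul_assoc (g a), hsq, one_mul, ih ht,
      Nat.choose_succ_succ', Nat.choose_one_right, pow_add]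

end AnticommutingFamily

section CentralIdempotent

variable {R A B C : Type*} [CommSemiring R] [Ring A] [Algebra R A] [Semiring B] [Algebra R B]
  [Semiring C] [Algebra R C] {p : A}

def AlgHom.prodOfCentralIdempotent (f : B →ₐ[R] A) (g : C →ₐ[R] A) (hp : IsIdempotentElem p)
    (hc : ∀ x, Commute p x) : B × C →ₐ[R] A :=
  AlgHom.ofLinearMap
    ((LinearMap.mulRight R p ∘ₗ f.toLinearMap).coprod
      (LinearMap.mulRight R (1 - p) ∘ₗ g.toLinearMap))
    (by simp)
    (fun x y => by
      have hq : ∀ x, Commute (1 - p) x := fun x => (Commute.one_left x).sub_left (hc x)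
      simp only [LinearMap.coprod_apply, LinearMap.comp_apply, LinearMap.mulRight_apply,
        AlgHom.toLinearMap_apply, Prod.fst_mul, Prod.snd_mul, map_mul, add_mul, mul_add,
        (hc _).mul_mul_mul_comm, (hq _).mul_mul_mul_comm, hp.eq, hp.one_sub.eq,
        hp.mul_one_sub_self, hp.one_sub_mul_self, mul_zero, add_zero, zero_add])

theorem AlgHom.prodOfCentralIdempotent_apply (f : B →ₐ[R] A) (g : C →ₐ[R] A)
    (hp : IsIdempotentElem p) (hc : ∀ x, Commute p x) (x : B × C) :
    prodOfCentralIdempotent f g hp hc x = f x.1 * p + g x.2 * (1 - p) :=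
  rfl

theorem AlgHom.prodOfCentralIdempotent_apply_mk_self (f : B →ₐ[R] A)
    (hp : IsIdempotentElem p) (hc : ∀ x, Commute p x) (b : B) :
    prodOfCentralIdempotent f f hp hc (b, b) = f b := by
  rw [prodOfCentralIdempotent_apply, ← mul_add, add_sub_cancel, mul_one]

end CentralIdempotent

section HalfOneAdd

variable {R A : Type*} [CommRing R] [Invertible (2 : R)] [Ring A] [Algebra R A] {u : A}

theorem isIdempotentElem_invOf_two_smul_one_add (hu : u * u = 1) :
    IsIdempotentElem ((⅟2 : R) • (1 + u)) := by
  have : (1 + u) * (1 + u) = (2 : R) • (1 + u) := by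
    rw [two_smul, mul_add, add_mul, add_mul, hu, one_mul, one_mul, mul_one]; abel
  unfold IsIdempotentElem
  rw [smul_mul_smul_comm, this, smul_smul, mul_assoc, invOf_mul_self, mul_one]

theorem invOf_two_smul_one_add_sub_one_sub (u : A) :
    (⅟2 : R) • (1 + u) - (1 - (⅟2 : R) • (1 + u)) = u := by
  rw [sub_sub_eq_add_sub, ← two_smul R, smul_smul, mul_invOf_self, one_smul, add_sub_cancel_left]

end HalfOneAdd

namespace CliffordAlgebra

variable {R M : Type*} [CommRing R] [AddCommGroup M] [Module R M] {Q : QuadraticForm R M}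

local notation "Q₊" => QuadraticMap.prod (QuadraticMap.sq (R := R)) Q
local notation "θ" => map (QuadraticMap.Isometry.inr (QuadraticMap.sq (R := R)) Q)
local notation "ε" => ι Q₊ (1, 0)

theorem ι_sqProd_mk (t : R) (m : M) : ι Q₊ (t, m) = t • ε + θ (ι Q m) := by
  rw [map_apply_ι, QuadraticMap.Isometry.inr_apply, ← map_smul, ← map_add, Prod.smul_mk,
    smul_eq_mul, mul_one, smul_zero, Prod.mk_add_mk, add_zero, zero_add]

theorem ι_sqProd_one_zero_mul_self : ε * ε = 1 := by
  rw [ι_sq_scalar, QuadraticMap.prod_apply, QuadraticMap.sq_apply, map_zero, mul_one, add_zero,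
    map_one]

theorem ι_sqProd_one_zero_mul_map_inr_ι (m : M) : ε * θ (ι Q m) = -(θ (ι Q m) * ε) := by
  rw [map_apply_ι]
  exact ι_mul_ι_comm_of_isOrtho (QuadraticMap.IsOrtho.inl_inr _ _)

theorem commute_map_inr_ι_sqProd_one_zero {x : CliffordAlgebra Q} (hx : x ∈ evenOdd Q 0) :
    Commute (θ x) ε := by
  have := commute_map_mul_map_of_isOrtho_of_mem_evenOdd_zero_left
    (QuadraticMap.Isometry.inr QuadraticMap.sq Q) (QuadraticMap.Isometry.inl QuadraticMap.sq Q)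
    (fun _ _ => QuadraticMap.IsOrtho.inr_inl _ _) x (ι _ (1 : R)) hx (ι_mem_evenOdd_one _ _)
  rwa [map_apply_ι, QuadraticMap.Isometry.inl_apply] at this

variable {ω : CliffordAlgebra Q}

local notation "Ω" => θ ω * ε

theorem map_inr_mul_ι_sqProd_one_zero_mul_self (hω_even : ω ∈ evenOdd Q 0) (hω_sq : ω * ω = 1) :
    Ω * Ω = 1 := by
  rw [mul_assoc, ← mul_assoc ε, ← (commute_map_inr_ι_sqProd_one_zero hω_even).eq, mul_assoc,
    ι_sqProd_one_zero_mul_self, mul_one, ← map_mul, hω_sq, map_one]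

theorem commute_map_inr_mul_ι_sqProd_one_zero (hω_even : ω ∈ evenOdd Q 0)
    (hω_anti : ∀ m, ι Q m * ω = -(ω * ι Q m)) (x : CliffordAlgebra Q₊) :
    Commute Ω x := by
  have hε : Commute (θ ω) ε := commute_map_inr_ι_sqProd_one_zero hω_even
  induction x using CliffordAlgebra.induction with
  | algebraMap r => exact Algebra.commute_algebraMap_right r _
  | ι v =>
    obtain ⟨t, m⟩ := v
    rw [ι_sqProd_mk t m]
    apply Commute.add_right
    · exact (hε.mul_left (Commute.refl ε)).smul_right t
    · rw [Commute, SemiconjBy, mul_assoc, ι_sqProd_one_zero_mul_map_inr_ι, mul_neg, ← mul_assoc,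
        ← mul_assoc, ← map_mul, ← map_mul, hω_anti, map_neg, neg_mul]
  | mul x y hx hy => exact hx.mul_right hy
  | add x y hx hy => exact hx.add_right hy

theorem ι_add_smul_mul_self (hω_sq : ω * ω = 1) (hω_anti : ∀ m, ι Q m * ω = -(ω * ι Q m))
    (m : M) (t : R) :
    (ι Q m + t • ω) * (ι Q m + t • ω) = algebraMap R _ (t * t + Q m) := by
  rw [mul_add, add_mul, add_mul, ι_sq_scalar, smul_mul_smul_comm, hω_sq, mul_smul_comm,
    smul_mul_assoc, hω_anti, smul_neg, map_add, Algebra.algebraMap_eq_smul_one (t * t)]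
  abel

def sqProdToProd (hω_sq : ω * ω = 1) (hω_anti : ∀ m, ι Q m * ω = -(ω * ι Q m)) :
    CliffordAlgebra Q₊ →ₐ[R] CliffordAlgebra Q × CliffordAlgebra Q :=
  lift Q₊ ⟨(ι Q ∘ₗ LinearMap.snd R R M + (LinearMap.fst R R M).smulRight ω).prod
      (ι Q ∘ₗ LinearMap.snd R R M - (LinearMap.fst R R M).smulRight ω), fun ⟨t, m⟩ => by
    change ((ι Q m + t • ω) * (ι Q m + t • ω), (ι Q m - t • ω) * (ι Q m - t • ω)) =
      (algebraMap R _ (t * t + Q m), algebraMap R _ (t * t + Q m))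
    rw [sub_eq_add_neg, ← neg_smul, ι_add_smul_mul_self hω_sq hω_anti,
      ι_add_smul_mul_self hω_sq hω_anti, neg_mul_neg]⟩

variable (hω_sq : ω * ω = 1) (hω_anti : ∀ m, ι Q m * ω = -(ω * ι Q m))

theorem sqProdToProd_ι (t : R) (m : M) :
    sqProdToProd hω_sq hω_anti (ι Q₊ (t, m)) = (ι Q m + t • ω, ι Q m - t • ω) :=
  lift_ι_apply _ _ _

theorem sqProdToProd_map_inr (x : CliffordAlgebra Q) :
    sqProdToProd hω_sq hω_anti (θ x) = (x, x) := by
  suffices (sqProdToProd hω_sq hω_anti).comp θ = (AlgHom.id R _).prod (AlgHom.id R _) from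
    AlgHom.congr_fun this x
  refine hom_ext (LinearMap.ext fun m => ?_)
  simp [sqProdToProd_ι]

theorem sqProdToProd_ι_one_zero : sqProdToProd hω_sq hω_anti ε = (ω, -ω) := by
  simp [sqProdToProd_ι]

variable [Invertible (2 : R)] (hω_even : ω ∈ evenOdd Q 0)

theorem sqProdToProd_half_one_add :
    sqProdToProd hω_sq hω_anti ((⅟2 : R) • (1 + Ω)) = (1, 0) := by
  rw [map_smul, map_add, map_one, map_mul, sqProdToProd_map_inr, sqProdToProd_ι_one_zero,
    Prod.mk_mul_mk, hω_sq, mul_neg, hω_sq, Prod.one_eq_mk, Prod.mk_add_mk, add_neg_cancel,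
    Prod.smul_mk, smul_zero, ← two_smul R, smul_smul, invOf_mul_self, one_smul]

def prodToSqProd : CliffordAlgebra Q × CliffordAlgebra Q →ₐ[R] CliffordAlgebra Q₊ :=
  AlgHom.prodOfCentralIdempotent θ θ
    (isIdempotentElem_invOf_two_smul_one_add (R := R)
      (map_inr_mul_ι_sqProd_one_zero_mul_self hω_even hω_sq))
    (fun x => ((Commute.one_left x).add_left
      (commute_map_inr_mul_ι_sqProd_one_zero hω_even hω_anti x)).smul_left _)

theorem prodToSqProd_mk_neg : prodToSqProd hω_sq hω_anti hω_even (ω, -ω) = ε := by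
  rw [prodToSqProd, AlgHom.prodOfCentralIdempotent_apply, map_neg, neg_mul, ← sub_eq_add_neg,
    ← mul_sub, invOf_two_smul_one_add_sub_one_sub, ← mul_assoc, ← map_mul, hω_sq, map_one, one_mul]

theorem sqProdToProd_prodToSqProd (x : CliffordAlgebra Q × CliffordAlgebra Q) :
    sqProdToProd hω_sq hω_anti (prodToSqProd hω_sq hω_anti hω_even x) = x := by
  rw [prodToSqProd, AlgHom.prodOfCentralIdempotent_apply, map_add, map_mul, map_mul, map_sub,
    map_one, sqProdToProd_map_inr, sqProdToProd_map_inr, sqProdToProd_half_one_add,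
    Prod.one_eq_mk, Prod.mk_sub_mk, sub_self, sub_zero, Prod.mk_mul_mk, Prod.mk_mul_mk,
    Prod.mk_add_mk]
  simp

theorem prodToSqProd_sqProdToProd (x : CliffordAlgebra Q₊) :
    prodToSqProd hω_sq hω_anti hω_even (sqProdToProd hω_sq hω_anti x) = x := by
  suffices (prodToSqProd hω_sq hω_anti hω_even).comp (sqProdToProd hω_sq hω_anti) =
      AlgHom.id R _ from AlgHom.congr_fun this x
  refine hom_ext (LinearMap.prod_ext (LinearMap.ext_ring ?_) (LinearMap.ext fun m => ?_))
  · simp [sqProdToProd_ι_one_zero, prodToSqProd_mk_neg]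
  · have : ι Q₊ (0, m) = θ (ι Q m) := by rw [map_apply_ι]; rfl
    simp only [AlgHom.toLinearMap_apply, LinearMap.comp_apply, LinearMap.inr_apply,
      AlgHom.comp_apply, AlgHom.id_apply]
    rw [this, sqProdToProd_map_inr, prodToSqProd, AlgHom.prodOfCentralIdempotent_apply_mk_self]

def sqProdEquivProd : CliffordAlgebra Q₊ ≃ₐ[R] CliffordAlgebra Q × CliffordAlgebra Q :=
  AlgEquiv.ofAlgHom (sqProdToProd hω_sq hω_anti) (prodToSqProd hω_sq hω_anti hω_even)
    (AlgHom.ext (sqProdToProd_prodToSqProd hω_sq hω_anti hω_even))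
    (AlgHom.ext (prodToSqProd_sqProdToProd hω_sq hω_anti hω_even))

end CliffordAlgebra

theorem Qf_apply (r : ℕ) (v : Fin r → ℂ) : Qf r v = ∑ i, v i * v i := by
  simp [Qf, QuadraticMap.weightedSumSquares_apply]

noncomputable def sqProdQfIsometryEquiv (r : ℕ) :
    (QuadraticMap.sq.prod (Qf r)).IsometryEquiv (Qf (r + 1)) where
  __ := Fin.consLinearEquiv ℂ fun _ => ℂ
  map_app' := fun ⟨t, v⟩ => by simp [Qf_apply, Fin.sum_univ_succ]

namespace CliffordC

open CliffordAlgebra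

noncomputable def gen (r : ℕ) (i : Fin r) : CliffordC r := ι (Qf r) (Pi.single i 1)

theorem gen_mul_self {r : ℕ} (i : Fin r) : gen r i * gen r i = 1 := by
  rw [gen, ι_sq_scalar, Qf_apply, Finset.sum_eq_single i (by simp +contextual) (by simp)]
  simp

theorem gen_anticommute (r : ℕ) :
    Pairwise fun i j => gen r i * gen r j = -(gen r j * gen r i) := by
  intro i j hij
  refine ι_mul_ι_comm_of_isOrtho ?_
  simp [QuadraticMap.IsOrtho, Qf_apply, Pi.single_apply, mul_add, Finset.sum_add_distrib, hij,
    hij.symm]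

noncomputable def chirality (r : ℕ) : CliffordC r :=
  Complex.I ^ r.choose 2 • ((List.finRange r).map (gen r)).prod

theorem chirality_mul_self (r : ℕ) : chirality r * chirality r = 1 := by
  rw [chirality, smul_mul_smul_comm, list_prod_map_mul_self_of_anticommute (gen_anticommute r)
    gen_mul_self (List.nodup_finRange r), List.length_finRange, ← mul_pow, Complex.I_mul_I,
    Algebra.smul_def, map_pow, map_neg, map_one, ← pow_add, ← two_mul, pow_mul, neg_one_sq,
    one_pow]

theorem gen_mul_chirality {r : ℕ} (hr : Even r) (i : Fin r) :
    gen r i * chirality r = -(chirality r * gen r i) := by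
  have hodd : Odd (r - 1) := Nat.Even.sub_odd i.pos hr odd_one
  rw [chirality, mul_smul_comm, mul_list_prod_map_of_anticommute (gen_anticommute r),
    List.length_finRange, List.count_finRange, hodd.neg_one_pow, smul_mul_assoc, neg_one_mul,
    smul_neg]

theorem ι_mul_chirality {r : ℕ} (hr : Even r) (v : Fin r → ℂ) :
    ι (Qf r) v * chirality r = -(chirality r * ι (Qf r) v) := by
  have := (Pi.basisFun ℂ (Fin r)).ext (f₁ := LinearMap.mulRight ℂ (chirality r) ∘ₗ ι (Qf r))
    (f₂ := -(LinearMap.mulLeft ℂ (chirality r) ∘ₗ ι (Qf r)))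
    fun i => by simpa [gen] using gen_mul_chirality hr i
  exact LinearMap.congr_fun this v

theorem chirality_mem_evenOdd_zero {r : ℕ} (hr : Even r) : chirality r ∈ evenOdd (Qf r) 0 := by
  refine Submodule.smul_mem _ _ ?_
  have := SetLike.list_prod_map_mem_graded (A := evenOdd (Qf r)) (List.finRange r) (fun _ => 1)
    (gen r) (fun i _ => ι_mem_evenOdd_one _ _)
  rwa [List.map_const', List.sum_replicate, List.length_finRange, nsmul_one,
    ZMod.natCast_eq_zero_iff_even.mpr hr] at this

end CliffordC

/-- The odd complex Clifford algebra is a product of two copies of the even one: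
`C(2n+1) ≅ C(2n) × C(2n)` as ℂ-algebras. -/
theorem clifford_odd_prod (n : ℕ) :
    Nonempty (CliffordC (2 * n + 1) ≃ₐ[ℂ] (CliffordC (2 * n) × CliffordC (2 * n))) :=
  ⟨(CliffordAlgebra.equivOfIsometry (sqProdQfIsometryEquiv (2 * n))).symm.trans
    (CliffordAlgebra.sqProdEquivProd (CliffordC.chirality_mul_self _)
      (CliffordC.ι_mul_chirality (even_two_mul n))
      (CliffordC.chirality_mem_evenOdd_zero (even_two_mul n)))⟩
end

section
/- For all n, k ∈ ℕ there is an isomorphism of ℂ-algebras C(2n, 2k) ≅ Matrix (Fin 2^n) (Fin 2^n) W_{2k}, the algebra of 2^n × 2^n matrices with entries in the Weyl algebra W_{2k}. -/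
/-!
In `C(n + 2, 2k)` the generators `u = ω₀` and `v = ω₁` satisfy `u² = v² = 1` and `uv = -vu`, so
the chirality `γ = -i uv` is an involution anticommuting with `u` and `v`. The idempotent
`P = (1 + γ) / 2` together with `u` yields a system of `2 × 2` matrix units `P, Pu, uP, uPu`,
and the twisted generators `γ ω_{i+2}, γ p_j, γ q_j` satisfy the relations of `C(n, 2k)` and
commute with these units. This gives `C(n + 2, 2k) ≅ M₂(C(n, 2k))`; the inverse sends `ω₀, ω₁` to
the Pauli matrices `σ_x, σ_y` and every other generator `g` to `σ_z g`. Starting from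
`C(0, 2k) = W_{2k}` and iterating `n` times gives `C(2n, 2k) ≅ M_{2^n}(W_{2k})`.
-/

/-- Generators of the Clifford–Weyl algebra `C(n, 2k)`:
`n` Fermi-type generators `ω_i` and `2k` Bose-type generators `p_i, q_i`. -/
inductive CWGen (n k : ℕ) : Type
  | w : Fin n → CWGen n k
  | p : Fin k → CWGen n k
  | q : Fin k → CWGen n k

/-- The defining relations of the Clifford–Weyl algebra `C(n, 2k)`:
`ω_i ω_j + ω_j ω_i = 2δ_{ij}`, `p_i q_j − q_j p_i = δ_{ij}`, `p_i p_j = p_j p_i`,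
`q_i q_j = q_j q_i`, `ω_i p_j = −p_j ω_i`, `ω_i q_j = −q_j ω_i`. -/
inductive CWRel (n k : ℕ) :
    FreeAlgebra ℂ (CWGen n k) → FreeAlgebra ℂ (CWGen n k) → Prop
  | ww (i j : Fin n) : CWRel n k
      (FreeAlgebra.ι ℂ (CWGen.w i) * FreeAlgebra.ι ℂ (CWGen.w j) +
        FreeAlgebra.ι ℂ (CWGen.w j) * FreeAlgebra.ι ℂ (CWGen.w i))
      (if i = j then 2 else 0)
  | pq (i j : Fin k) : CWRel n k
      (FreeAlgebra.ι ℂ (CWGen.p i) * FreeAlgebra.ι ℂ (CWGen.q j) -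
        FreeAlgebra.ι ℂ (CWGen.q j) * FreeAlgebra.ι ℂ (CWGen.p i))
      (if i = j then 1 else 0)
  | pp (i j : Fin k) : CWRel n k
      (FreeAlgebra.ι ℂ (CWGen.p i) * FreeAlgebra.ι ℂ (CWGen.p j))
      (FreeAlgebra.ι ℂ (CWGen.p j) * FreeAlgebra.ι ℂ (CWGen.p i))
  | qq (i j : Fin k) : CWRel n k
      (FreeAlgebra.ι ℂ (CWGen.q i) * FreeAlgebra.ι ℂ (CWGen.q j))
      (FreeAlgebra.ι ℂ (CWGen.q j) * FreeAlgebra.ι ℂ (CWGen.q i))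
  | wp (i : Fin n) (j : Fin k) : CWRel n k
      (FreeAlgebra.ι ℂ (CWGen.w i) * FreeAlgebra.ι ℂ (CWGen.p j))
      (-(FreeAlgebra.ι ℂ (CWGen.p j) * FreeAlgebra.ι ℂ (CWGen.w i)))
  | wq (i : Fin n) (j : Fin k) : CWRel n k
      (FreeAlgebra.ι ℂ (CWGen.w i) * FreeAlgebra.ι ℂ (CWGen.q j))
      (-(FreeAlgebra.ι ℂ (CWGen.q j) * FreeAlgebra.ι ℂ (CWGen.w i)))

/-- The Clifford–Weyl algebra `C(n, 2k)`, presented by generators and relations. -/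
abbrev CliffordWeyl (n k : ℕ) : Type := RingQuot (CWRel n k)

/-- Generators of the Weyl algebra `W_{2k}`: `p_i, q_i` for `i ∈ Fin k`. -/
inductive WGen (k : ℕ) : Type
  | p : Fin k → WGen k
  | q : Fin k → WGen k

/-- The defining relations of the Weyl algebra `W_{2k}`:
`p_i q_j − q_j p_i = δ_{ij}`, `p_i p_j = p_j p_i`, `q_i q_j = q_j q_i`. -/
inductive WRel (k : ℕ) : FreeAlgebra ℂ (WGen k) → FreeAlgebra ℂ (WGen k) → Prop
  | pq (i j : Fin k) : WRel k
      (FreeAlgebra.ι ℂ (WGen.p i) * FreeAlgebra.ι ℂ (WGen.q j) -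
        FreeAlgebra.ι ℂ (WGen.q j) * FreeAlgebra.ι ℂ (WGen.p i))
      (if i = j then 1 else 0)
  | pp (i j : Fin k) : WRel k
      (FreeAlgebra.ι ℂ (WGen.p i) * FreeAlgebra.ι ℂ (WGen.p j))
      (FreeAlgebra.ι ℂ (WGen.p j) * FreeAlgebra.ι ℂ (WGen.p i))
  | qq (i j : Fin k) : WRel k
      (FreeAlgebra.ι ℂ (WGen.q i) * FreeAlgebra.ι ℂ (WGen.q j))
      (FreeAlgebra.ι ℂ (WGen.q j) * FreeAlgebra.ι ℂ (WGen.q i))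

/-- The Weyl algebra `W_{2k}`, presented by generators and relations. -/
abbrev WeylAlg (k : ℕ) : Type := RingQuot (WRel k)

section Families

variable {B C : Type*} [Ring B] [Ring C] {n m k : ℕ}

structure IsWeylFamily (p q : Fin k → B) : Prop where
  pq : ∀ i j, p i * q j - q j * p i = if i = j then 1 else 0
  pp : ∀ i j, p i * p j = p j * p i
  qq : ∀ i j, q i * q j = q j * q i

structure IsCliffordWeylFamily (w : Fin n → B) (p q : Fin k → B) : Prop
    extends IsWeylFamily p q where
  ww : ∀ i j, w i * w j + w j * w i = if i = j then 2 else 0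
  wp : ∀ i j, w i * p j = -(p j * w i)
  wq : ∀ i j, w i * q j = -(q j * w i)

namespace IsCliffordWeylFamily

variable {w : Fin n → B} {p q : Fin k → B}

theorem map (h : IsCliffordWeylFamily w p q) (f : B →+* C) :
    IsCliffordWeylFamily (f ∘ w) (f ∘ p) (f ∘ q) where
  pq i j := by simpa [apply_ite f] using congrArg f (h.pq i j)
  pp i j := by simpa using congrArg f (h.pp i j)
  qq i j := by simpa using congrArg f (h.qq i j)
  ww i j := by simpa [apply_ite f, map_ofNat] using congrArg f (h.ww i j)
  wp i j := by simpa using congrArg f (h.wp i j)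
  wq i j := by simpa using congrArg f (h.wq i j)

theorem anticomm (h : IsCliffordWeylFamily w p q) {i j : Fin n} (hij : i ≠ j) :
    w i * w j = -(w j * w i) :=
  eq_neg_of_add_eq_zero_left (by simpa [hij] using h.ww i j)

theorem comp (h : IsCliffordWeylFamily w p q) {e : Fin m → Fin n} (he : e.Injective) :
    IsCliffordWeylFamily (w ∘ e) p q where
  toIsWeylFamily := h.toIsWeylFamily
  ww i j := by simpa [he.eq_iff] using h.ww (e i) (e j)
  wp i j := h.wp (e i) j
  wq i j := h.wq (e i) j

theorem cons (h : IsCliffordWeylFamily w p q) {u : B} (hu : u * u = 1)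
    (huw : ∀ i, u * w i = -(w i * u)) (hup : ∀ j, u * p j = -(p j * u))
    (huq : ∀ j, u * q j = -(q j * u)) :
    IsCliffordWeylFamily (Fin.cons u w : Fin (n + 1) → B) p q where
  toIsWeylFamily := h.toIsWeylFamily
  ww i j := by
    induction i using Fin.cases <;> induction j using Fin.cases <;>
      simp [huw, h.ww, hu, one_add_one_eq_two, Fin.succ_ne_zero, (Fin.succ_ne_zero _).symm]
  wp i j := by
    induction i using Fin.cases
    exacts [hup j, h.wp _ j]
  wq i j := by
    induction i using Fin.cases
    exacts [huq j, h.wq _ j]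

theorem mul_left (h : IsCliffordWeylFamily w p q) {γ : B} (hγ : γ * γ = 1)
    (hw : ∀ i, Commute γ (w i)) (hp : ∀ j, Commute γ (p j)) (hq : ∀ j, Commute γ (q j)) :
    IsCliffordWeylFamily (fun i => γ * w i) (fun j => γ * p j) (fun j => γ * q j) := by
  have key : ∀ {a b : B}, Commute γ a → (γ * a) * (γ * b) = a * b := fun {a b} ha => by
    rw [mul_assoc, ← mul_assoc a, ← ha.eq, mul_assoc, ← mul_assoc, hγ, one_mul]
  exact
    { pq i j := by simpa only [key (hp i), key (hq j)] using h.pq i j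
      pp i j := by simpa only [key (hp i), key (hp j)] using h.pp i j
      qq i j := by simpa only [key (hq i), key (hq j)] using h.qq i j
      ww i j := by simpa only [key (hw i), key (hw j)] using h.ww i j
      wp i j := by simpa only [key (hw i), key (hp j)] using h.wp i j
      wq i j := by simpa only [key (hw i), key (hq j)] using h.wq i j }

end IsCliffordWeylFamily

end Families

section MatrixUnits

open Matrix

variable {R A B m : Type*} [CommSemiring R] [Semiring A] [Algebra R A] [Semiring B] [Algebra R B]
  [Fintype m] [DecidableEq m]

def matrixUnitsLift (e : Matrix m m B) (f : A →ₐ[R] B)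
    (he : ∀ i j k l, e i j * e k l = if j = k then e i l else 0) (hsum : ∑ i, e i i = 1)
    (hcomm : ∀ i j a, Commute (e i j) (f a)) : Matrix m m A →ₐ[R] B :=
  AlgHom.ofLinearMap
    { toFun := fun M => ∑ i, ∑ j, e i j * f (M i j)
      map_add' := fun M N => by simp [mul_add, Finset.sum_add_distrib]
      map_smul' := fun c M => by simp [Finset.smul_sum] }
    (by simp [one_apply, hsum])
    (fun M N => by
      have key : ∀ a b c d, e a b * f (M a b) * (e c d * f (N c d)) =
          if b = c then e a d * (f (M a b) * f (N c d)) else 0 := fun a b c d => by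
        rw [mul_assoc, ← mul_assoc (f _), ← (hcomm c d _).eq, ← mul_assoc, ← mul_assoc, he]
        split_ifs <;> simp [mul_assoc]
      simp only [LinearMap.coe_mk, AddHom.coe_mk, Finset.sum_mul, Finset.mul_sum, mul_apply,
        map_sum, map_mul, key, Finset.sum_ite_eq', Finset.mem_univ, if_true]
      rw [Finset.sum_comm]
      conv_rhs => rw [Finset.sum_comm]
      exact Finset.sum_congr rfl fun _ _ => Finset.sum_comm)

variable {e : Matrix m m B} {f : A →ₐ[R] B}
  (he : ∀ i j k l, e i j * e k l = if j = k then e i l else 0) (hsum : ∑ i, e i i = 1)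
  (hcomm : ∀ i j a, Commute (e i j) (f a))

theorem matrixUnitsLift_apply (M : Matrix m m A) :
    matrixUnitsLift e f he hsum hcomm M = ∑ i, ∑ j, e i j * f (M i j) :=
  rfl

theorem matrixUnitsLift_single (i j : m) (a : A) :
    matrixUnitsLift e f he hsum hcomm (single i j a) = e i j * f a := by
  simp [matrixUnitsLift_apply, single_apply, apply_ite f, ite_and]

theorem matrixUnitsLift_scalar (a : A) :
    matrixUnitsLift e f he hsum hcomm (scalar m a) = f a := by
  simp [matrixUnitsLift_apply, diagonal_apply, apply_ite f, ← Finset.sum_mul, hsum]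

end MatrixUnits

section MatrixUnitsOfIdempotent

open Matrix

variable {B : Type*} [Ring B]

theorem vecMulVec_mul_vecMulVec_eq_ite {n : Type*} [DecidableEq n] {c r : n → B} {p : B}
    (hrc : ∀ j k, r j * c k = if j = k then p else 0) (hcp : ∀ i, c i * p = c i)
    (i j k l : n) :
    vecMulVec c r i j * vecMulVec c r k l = if j = k then vecMulVec c r i l else 0 := by
  simp only [vecMulVec_apply, mul_assoc, ← mul_assoc (r j), hrc]
  split_ifs <;> simp [← mul_assoc, hcp]

def matrixUnitsOf (p u : B) : Matrix (Fin 2) (Fin 2) B := vecMulVec ![p, u * p] ![p, p * u]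

variable {p u : B}

theorem matrixUnitsOf_commute {x : B} (hpx : Commute p x) (hux : Commute u x) (i j : Fin 2) :
    Commute (matrixUnitsOf p u i j) x := by
  fin_cases i <;> fin_cases j <;> simp [matrixUnitsOf, vecMulVec_apply] <;>
    simp only [hpx, hux, Commute.mul_left]

theorem map_matrixUnitsOf {C F : Type*} [Ring C] [FunLike F B C] [RingHomClass F B C] (f : F)
    (i j : Fin 2) :
    f (matrixUnitsOf p u i j) = matrixUnitsOf (f p) (f u) i j := by
  fin_cases i <;> fin_cases j <;> simp [matrixUnitsOf, vecMulVec_apply]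

variable (hp : IsIdempotentElem p) (hu : u * u = 1) (hup : u * p = (1 - p) * u)
include hp hup

theorem eq_matrixUnitsOf_add : u = matrixUnitsOf p u 0 1 + matrixUnitsOf p u 1 0 := by
  have : matrixUnitsOf p u 0 1 + matrixUnitsOf p u 1 0 = p * u + u * p := by
    simp [matrixUnitsOf, vecMulVec_apply, hp.eq, mul_assoc u p p, ← mul_assoc p p u]
  rw [this, hup, ← add_mul, add_sub_cancel, one_mul]

include hu

theorem matrixUnitsOf_mul (i j k l : Fin 2) :
    matrixUnitsOf p u i j * matrixUnitsOf p u k l =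
      if j = k then matrixUnitsOf p u i l else 0 := by
  have hpup : p * (u * p) = 0 := by
    rw [hup, ← mul_assoc, mul_sub, mul_one, hp.eq, sub_self, zero_mul]
  have huu (x : B) : u * (u * x) = x := by rw [← mul_assoc, hu, one_mul]
  refine vecMulVec_mul_vecMulVec_eq_ite (p := p) (fun j k => ?_) (fun i => ?_) i j k l
  · fin_cases j <;> fin_cases k <;> simp [hp.eq, hpup, mul_assoc, huu]
  · fin_cases i <;> simp [mul_assoc, hp.eq]

theorem matrixUnitsOf_sum : ∑ i, matrixUnitsOf p u i i = 1 := by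
  simp [matrixUnitsOf, vecMulVec_apply, Fin.sum_univ_two, hp.eq, mul_assoc, ← mul_assoc p p u]
  rw [← mul_assoc, hup, mul_assoc, hu, mul_one, add_sub_cancel]

end MatrixUnitsOfIdempotent

section PauliPair

variable {B C : Type*} [Ring B] [Ring C] {u v x : B}

structure IsPauliPair (u v : B) : Prop where
  mul_self_left : u * u = 1
  mul_self_right : v * v = 1
  anticomm : u * v = -(v * u)

theorem IsPauliPair.mul_comm_eq_neg (h : IsPauliPair u v) : v * u = -(u * v) := by
  rw [h.anticomm, neg_neg]

theorem IsPauliPair.mul_mul_left (h : IsPauliPair u v) : u * v * u = -v := by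
  rw [mul_assoc, h.mul_comm_eq_neg, mul_neg, ← mul_assoc, h.mul_self_left, one_mul]

variable [Algebra ℂ B] [Algebra ℂ C]

def chirality (u v : B) : B := -Complex.I • (u * v)

noncomputable def chiralProj (u v : B) : B := (2⁻¹ : ℂ) • (1 + chirality u v)

noncomputable def pauliUnits (u v : B) : Matrix (Fin 2) (Fin 2) B :=
  matrixUnitsOf (chiralProj u v) u

theorem map_chirality (f : B →ₐ[ℂ] C) : f (chirality u v) = chirality (f u) (f v) := by
  simp [chirality]

theorem map_pauliUnits (f : B →ₐ[ℂ] C) (i j : Fin 2) :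
    f (pauliUnits u v i j) = pauliUnits (f u) (f v) i j := by
  rw [pauliUnits, map_matrixUnitsOf, chiralProj, map_smul, map_add, map_one, map_chirality,
    pauliUnits, chiralProj]

theorem commute_chirality (hux : u * x = -(x * u)) (hvx : v * x = -(x * v)) :
    Commute (chirality u v) x := by
  rw [Commute, SemiconjBy, chirality, smul_mul_assoc, mul_smul_comm, mul_assoc, hvx, mul_neg,
    ← mul_assoc, hux, neg_mul, neg_neg, mul_assoc]

theorem pauliUnits_commute (hux : Commute u x) (hγx : Commute (chirality u v) x) (i j : Fin 2) :
    Commute (pauliUnits u v i j) x :=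
  matrixUnitsOf_commute (((Commute.one_left x).add_left hγx).smul_left _) hux i j

namespace IsPauliPair

variable (h : IsPauliPair u v)
include h

theorem chirality_mul_self : chirality u v * chirality u v = 1 := by
  have huvuv : u * v * (u * v) = -1 := by
    rw [mul_assoc, ← mul_assoc v u v, h.mul_comm_eq_neg, neg_mul, mul_neg, mul_assoc u v v,
      h.mul_self_right, mul_one, h.mul_self_left]
  rw [chirality, smul_mul_smul_comm, huvuv]
  simp

theorem chirality_mul_left : chirality u v * u = Complex.I • v := by
  rw [chirality, smul_mul_assoc, h.mul_mul_left, smul_neg, neg_smul, neg_neg]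

theorem anticomm_chirality_left : u * chirality u v = -(chirality u v * u) := by
  rw [h.chirality_mul_left, chirality, mul_smul_comm, ← mul_assoc, h.mul_self_left, one_mul,
    neg_smul]

theorem anticomm_chirality_right : v * chirality u v = -(chirality u v * v) := by
  have hvuv : v * (u * v) = -u := by
    rw [← mul_assoc, h.mul_comm_eq_neg, neg_mul, mul_assoc, h.mul_self_right, mul_one]
  rw [chirality, mul_smul_comm, smul_mul_assoc, hvuv, mul_assoc, h.mul_self_right, mul_one,
    smul_neg]

theorem anticomm_left_chirality_mul (hux : Commute u x) :
    u * (chirality u v * x) = -(chirality u v * x * u) := by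
  rw [← mul_assoc, h.anticomm_chirality_left, neg_mul, mul_assoc, hux.eq, mul_assoc]

theorem anticomm_right_chirality_mul (hvx : Commute v x) :
    v * (chirality u v * x) = -(chirality u v * x * v) := by
  rw [← mul_assoc, h.anticomm_chirality_right, neg_mul, mul_assoc, hvx.eq, mul_assoc]

theorem commute_left_chirality_mul (hux : u * x = -(x * u)) :
    Commute u (chirality u v * x) := by
  rw [Commute, SemiconjBy, ← mul_assoc, h.anticomm_chirality_left, neg_mul, mul_assoc, hux,
    mul_neg, neg_neg, mul_assoc]

theorem isIdempotentElem_chiralProj : IsIdempotentElem (chiralProj u v) := by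
  rw [IsIdempotentElem, chiralProj, smul_mul_smul_comm, add_mul, mul_add, mul_add, one_mul,
    mul_one, one_mul, h.chirality_mul_self]
  module

theorem mul_chiralProj : u * chiralProj u v = (1 - chiralProj u v) * u := by
  rw [chiralProj, mul_smul_comm, mul_add, mul_one, h.anticomm_chirality_left, sub_mul, one_mul,
    smul_mul_assoc, add_mul, one_mul]
  module

theorem pauliUnits_mul (i j k l : Fin 2) :
    pauliUnits u v i j * pauliUnits u v k l = if j = k then pauliUnits u v i l else 0 :=
  matrixUnitsOf_mul h.isIdempotentElem_chiralProj h.mul_self_left h.mul_chiralProj i j k l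

theorem pauliUnits_sum : ∑ i, pauliUnits u v i i = 1 :=
  matrixUnitsOf_sum h.isIdempotentElem_chiralProj h.mul_self_left h.mul_chiralProj

theorem eq_pauliUnits_add : u = pauliUnits u v 0 1 + pauliUnits u v 1 0 :=
  eq_matrixUnitsOf_add h.isIdempotentElem_chiralProj h.mul_chiralProj

theorem eq_smul_pauliUnits_sub : v = Complex.I • (pauliUnits u v 1 0 - pauliUnits u v 0 1) := by
  have hp := h.isIdempotentElem_chiralProj
  have hsub : pauliUnits u v 1 0 - pauliUnits u v 0 1 = -(chirality u v * u) := by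
    simp only [pauliUnits, matrixUnitsOf, Matrix.vecMulVec_apply, Matrix.cons_val_zero,
      Matrix.cons_val_one]
    rw [mul_assoc u, hp.eq, ← mul_assoc _ _ u, hp.eq, h.mul_chiralProj, chiralProj]
    simp only [sub_mul, add_mul, smul_mul_assoc, one_mul]
    module
  rw [hsub, h.chirality_mul_left, smul_neg, smul_smul, Complex.I_mul_I, neg_smul, one_smul,
    neg_neg]

end IsPauliPair

end PauliPair

section PauliMatrices

open Matrix

variable (A : Type*) [Ring A]

def pauliX : Matrix (Fin 2) (Fin 2) A := !![0, 1; 1, 0]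

theorem pauliX_commute_scalar (a : A) : Commute (pauliX A) (scalar (Fin 2) a) := by
  ext i j; fin_cases i <;> fin_cases j <;> simp [pauliX]

variable [Algebra ℂ A]

def pauliY : Matrix (Fin 2) (Fin 2) A := Complex.I • !![0, -1; 1, 0]

theorem pauliY_commute_scalar (a : A) : Commute (pauliY A) (scalar (Fin 2) a) := by
  refine Commute.smul_left ?_ _
  ext i j; fin_cases i <;> fin_cases j <;> simp

theorem isPauliPair_pauliX_pauliY : IsPauliPair (pauliX A) (pauliY A) := by
  refine ⟨?_, ?_, ?_⟩ <;> ext i j <;> fin_cases i <;> fin_cases j <;>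
    simp [pauliX, pauliY, mul_apply, Fin.sum_univ_two, smul_smul]

theorem chirality_pauliX_pauliY : chirality (pauliX A) (pauliY A) = !![1, 0; 0, -1] := by
  ext i j; fin_cases i <;> fin_cases j <;>
    simp [chirality, pauliX, pauliY, smul_smul]

theorem pauliUnits_pauliX_pauliY (i j : Fin 2) :
    pauliUnits (pauliX A) (pauliY A) i j = single i j 1 := by
  have hproj : (2⁻¹ : ℂ) • (1 + !![1, 0; 0, -1] : Matrix (Fin 2) (Fin 2) A) = !![1, 0; 0, 0] := by
    ext a b; fin_cases a <;> fin_cases b <;> simp [one_apply]; module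
  rw [pauliUnits, chiralProj, chirality_pauliX_pauliY, hproj]
  ext a b; fin_cases i <;> fin_cases j <;> fin_cases a <;> fin_cases b <;>
    simp [matrixUnitsOf, vecMulVec_apply, pauliX, mul_apply, Fin.sum_univ_two]

end PauliMatrices

namespace IsCliffordWeylFamily

variable {A B : Type*} [Ring A] [Ring B] [Algebra ℂ B] {n k : ℕ}

theorem mul_self_eq_one {w : Fin n → B} {p q : Fin k → B} (h : IsCliffordWeylFamily w p q)
    (i : Fin n) : w i * w i = 1 := by
  have h2 : w i * w i + w i * w i = 2 := by simpa using h.ww i i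
  calc w i * w i = (2⁻¹ : ℂ) • (w i * w i + w i * w i) := by module
    _ = (2⁻¹ * 2 : ℂ) • (1 : B) := by rw [h2, mul_smul, two_smul, one_add_one_eq_two]
    _ = 1 := by norm_num

theorem isPauliPair {w : Fin n → B} {p q : Fin k → B} (h : IsCliffordWeylFamily w p q)
    {i j : Fin n} (hij : i ≠ j) : IsPauliPair (w i) (w j) :=
  ⟨h.mul_self_eq_one i, h.mul_self_eq_one j, h.anticomm hij⟩

theorem cons_pauliPair {w : Fin n → A} {p q : Fin k → A} (h : IsCliffordWeylFamily w p q)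
    (f : A →+* B) {u v : B} (huv : IsPauliPair u v) (hu : ∀ a, Commute u (f a))
    (hv : ∀ a, Commute v (f a)) :
    IsCliffordWeylFamily
      (Fin.cons u (Fin.cons v fun i => chirality u v * f (w i)) : Fin (n + 2) → B)
      (fun j => chirality u v * f (p j)) (fun j => chirality u v * f (q j)) := by
  have hγ (a : A) : Commute (chirality u v) (f a) := ((hu a).mul_left (hv a)).smul_left _
  have htwist := (h.map f).mul_left huv.chirality_mul_self (fun i => hγ _) (fun j => hγ _)
    (fun j => hγ _)
  refine (htwist.cons huv.mul_self_right (fun i => huv.anticomm_right_chirality_mul (hv _))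
    (fun j => huv.anticomm_right_chirality_mul (hv _))
    (fun j => huv.anticomm_right_chirality_mul (hv _))).cons huv.mul_self_left ?_
    (fun j => huv.anticomm_left_chirality_mul (hu _))
    (fun j => huv.anticomm_left_chirality_mul (hu _))
  intro i
  induction i using Fin.cases
  exacts [huv.anticomm, huv.anticomm_left_chirality_mul (hu _)]

theorem chirality_mul {w : Fin (n + 2) → B} {p q : Fin k → B} (h : IsCliffordWeylFamily w p q) :
    IsCliffordWeylFamily (fun i => chirality (w 0) (w 1) * w i.succ.succ)
      (fun j => chirality (w 0) (w 1) * p j) (fun j => chirality (w 0) (w 1) * q j) :=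
  (h.comp (Fin.succ_injective _ |>.comp (Fin.succ_injective _))).mul_left
    (h.isPauliPair (by simp)).chirality_mul_self
    (fun i => commute_chirality (h.anticomm (by simp [Fin.ext_iff]))
      (h.anticomm (by simp [Fin.ext_iff])))
    (fun j => commute_chirality (h.wp 0 j) (h.wp 1 j))
    (fun j => commute_chirality (h.wq 0 j) (h.wq 1 j))

end IsCliffordWeylFamily

namespace CliffordWeyl

variable {n k : ℕ} {B : Type*} [Ring B] [Algebra ℂ B]

def ω (i : Fin n) : CliffordWeyl n k := RingQuot.mkAlgHom ℂ _ (FreeAlgebra.ι ℂ (CWGen.w i))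

def p (j : Fin k) : CliffordWeyl n k := RingQuot.mkAlgHom ℂ _ (FreeAlgebra.ι ℂ (CWGen.p j))

def q (j : Fin k) : CliffordWeyl n k := RingQuot.mkAlgHom ℂ _ (FreeAlgebra.ι ℂ (CWGen.q j))

theorem isCliffordWeylFamily :
    IsCliffordWeylFamily (ω : Fin n → CliffordWeyl n k) p q where
  pq i j := by
    simpa [ω, p, q, apply_ite (RingQuot.mkAlgHom ℂ _)] using RingQuot.mkAlgHom_rel ℂ (CWRel.pq (n := n) i j)
  pp i j := by simpa [ω, p, q] using RingQuot.mkAlgHom_rel ℂ (CWRel.pp (n := n) i j)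
  qq i j := by simpa [ω, p, q] using RingQuot.mkAlgHom_rel ℂ (CWRel.qq (n := n) i j)
  ww i j := by
    simpa [ω, apply_ite (RingQuot.mkAlgHom ℂ _), map_ofNat] using
      RingQuot.mkAlgHom_rel ℂ (CWRel.ww (k := k) i j)
  wp i j := by simpa [ω, p, q] using RingQuot.mkAlgHom_rel ℂ (CWRel.wp i j)
  wq i j := by simpa [ω, p, q] using RingQuot.mkAlgHom_rel ℂ (CWRel.wq i j)

def lift {w : Fin n → B} {a b : Fin k → B} (h : IsCliffordWeylFamily w a b) :
    CliffordWeyl n k →ₐ[ℂ] B :=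
  RingQuot.liftAlgHom ℂ ⟨FreeAlgebra.lift ℂ fun | .w i => w i | .p j => a j | .q j => b j, by
    rintro _ _ (⟨i, j⟩ | ⟨i, j⟩ | ⟨i, j⟩ | ⟨i, j⟩ | ⟨i, j⟩ | ⟨i, j⟩) <;>
      simp only [map_add, map_sub, map_mul, map_neg, FreeAlgebra.lift_ι_apply]
    · rw [h.ww i j, apply_ite (FreeAlgebra.lift ℂ _), map_ofNat, map_zero]
    · rw [h.pq i j, apply_ite (FreeAlgebra.lift ℂ _), map_one, map_zero]
    exacts [h.pp i j, h.qq i j, h.wp i j, h.wq i j]⟩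

section Lift

variable {w : Fin n → B} {a b : Fin k → B} (h : IsCliffordWeylFamily w a b)

@[simp] theorem lift_ω (i : Fin n) : lift h (ω i) = w i := by
  simp [lift, ω, RingQuot.liftAlgHom_mkAlgHom_apply]

@[simp] theorem lift_p (j : Fin k) : lift h (p j) = a j := by
  simp [lift, p, RingQuot.liftAlgHom_mkAlgHom_apply]

@[simp] theorem lift_q (j : Fin k) : lift h (q j) = b j := by
  simp [lift, q, RingQuot.liftAlgHom_mkAlgHom_apply]

end Lift

theorem algHom_ext {f g : CliffordWeyl n k →ₐ[ℂ] B} (hω : ∀ i, f (ω i) = g (ω i))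
    (hp : ∀ j, f (p j) = g (p j)) (hq : ∀ j, f (q j) = g (q j)) : f = g := by
  refine RingQuot.ringQuot_ext' _ _ _ (FreeAlgebra.hom_ext (funext ?_))
  rintro (i | j | j)
  exacts [hω i, hp j, hq j]

theorem commute_of_commute_generators (f : CliffordWeyl n k →ₐ[ℂ] B) {c : B}
    (hω : ∀ i, Commute c (f (ω i))) (hp : ∀ j, Commute c (f (p j)))
    (hq : ∀ j, Commute c (f (q j))) (x : CliffordWeyl n k) : Commute c (f x) := by
  obtain ⟨x, rfl⟩ := RingQuot.mkAlgHom_surjective ℂ (CWRel n k) x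
  induction x using FreeAlgebra.induction with
  | grade0 r => simpa using Algebra.commute_algebraMap_right r c
  | grade1 g => rcases g with i | j | j; exacts [hω i, hp j, hq j]
  | add x y hx hy => simpa using hx.add_right hy
  | mul x y hx hy => simpa using hx.mul_right hy

end CliffordWeyl

namespace WeylAlg

variable {k : ℕ} {B : Type*} [Ring B] [Algebra ℂ B]

def p (j : Fin k) : WeylAlg k := RingQuot.mkAlgHom ℂ _ (FreeAlgebra.ι ℂ (WGen.p j))

def q (j : Fin k) : WeylAlg k := RingQuot.mkAlgHom ℂ _ (FreeAlgebra.ι ℂ (WGen.q j))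

theorem isWeylFamily : IsWeylFamily (p : Fin k → WeylAlg k) q where
  pq i j := by
    simpa [p, q, apply_ite (RingQuot.mkAlgHom ℂ _)] using RingQuot.mkAlgHom_rel ℂ (WRel.pq i j)
  pp i j := by simpa [p, q] using RingQuot.mkAlgHom_rel ℂ (WRel.pp i j)
  qq i j := by simpa [p, q] using RingQuot.mkAlgHom_rel ℂ (WRel.qq i j)

def lift {a b : Fin k → B} (h : IsWeylFamily a b) : WeylAlg k →ₐ[ℂ] B :=
  RingQuot.liftAlgHom ℂ ⟨FreeAlgebra.lift ℂ fun | .p j => a j | .q j => b j, by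
    rintro _ _ (⟨i, j⟩ | ⟨i, j⟩ | ⟨i, j⟩) <;>
      simp only [map_sub, map_mul, FreeAlgebra.lift_ι_apply]
    · rw [h.pq i j, apply_ite (FreeAlgebra.lift ℂ _), map_one, map_zero]
    exacts [h.pp i j, h.qq i j]⟩

section Lift

variable {a b : Fin k → B} (h : IsWeylFamily a b)

@[simp] theorem lift_p (j : Fin k) : lift h (p j) = a j := by
  simp [lift, p, RingQuot.liftAlgHom_mkAlgHom_apply]

@[simp] theorem lift_q (j : Fin k) : lift h (q j) = b j := by
  simp [lift, q, RingQuot.liftAlgHom_mkAlgHom_apply]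

end Lift

theorem algHom_ext {f g : WeylAlg k →ₐ[ℂ] B} (hp : ∀ j, f (p j) = g (p j))
    (hq : ∀ j, f (q j) = g (q j)) : f = g := by
  refine RingQuot.ringQuot_ext' _ _ _ (FreeAlgebra.hom_ext (funext ?_))
  rintro (j | j)
  exacts [hp j, hq j]

end WeylAlg

def cliffordWeylZeroEquiv (k : ℕ) : CliffordWeyl 0 k ≃ₐ[ℂ] WeylAlg k :=
  AlgEquiv.ofAlgHom
    (CliffordWeyl.lift (w := Fin.elim0)
      { toIsWeylFamily := WeylAlg.isWeylFamily
        ww i := i.elim0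
        wp i := i.elim0
        wq i := i.elim0 })
    (WeylAlg.lift CliffordWeyl.isCliffordWeylFamily.toIsWeylFamily)
    (WeylAlg.algHom_ext (by simp) (by simp))
    (CliffordWeyl.algHom_ext (fun i => i.elim0) (by simp) (by simp))

namespace CliffordWeyl

open Matrix

variable (n k : ℕ)

noncomputable def toMatrix :
    CliffordWeyl (n + 2) k →ₐ[ℂ] Matrix (Fin 2) (Fin 2) (CliffordWeyl n k) :=
  lift (isCliffordWeylFamily.cons_pauliPair (scalar (Fin 2)) (isPauliPair_pauliX_pauliY _)
    (pauliX_commute_scalar _) (pauliY_commute_scalar _))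

noncomputable def twistedEmbedding : CliffordWeyl n k →ₐ[ℂ] CliffordWeyl (n + 2) k :=
  lift isCliffordWeylFamily.chirality_mul

variable {n k}

theorem isPauliPair_ω_zero_one : IsPauliPair (ω 0 : CliffordWeyl (n + 2) k) (ω 1) :=
  isCliffordWeylFamily.isPauliPair (by simp)

theorem commute_ω_zero_twistedEmbedding (x : CliffordWeyl n k) :
    Commute (ω 0) (twistedEmbedding n k x) := by
  have h := isCliffordWeylFamily (n := n + 2) (k := k)
  refine commute_of_commute_generators _ (fun i => ?_) (fun j => ?_) (fun j => ?_) x <;>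
    simp only [twistedEmbedding, lift_ω, lift_p, lift_q] <;>
    refine isPauliPair_ω_zero_one.commute_left_chirality_mul ?_
  exacts [h.anticomm (by simp [Fin.ext_iff]), h.wp 0 j, h.wq 0 j]

theorem commute_chirality_twistedEmbedding (x : CliffordWeyl n k) :
    Commute (chirality (ω 0) (ω 1)) (twistedEmbedding n k x) := by
  have h := isCliffordWeylFamily (n := n + 2) (k := k)
  refine commute_of_commute_generators _ (fun i => ?_) (fun j => ?_) (fun j => ?_) x <;>
    simp only [twistedEmbedding, lift_ω, lift_p, lift_q] <;>
    refine (Commute.refl _).mul_right (commute_chirality ?_ ?_)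
  exacts [h.anticomm (by simp [Fin.ext_iff]), h.anticomm (by simp [Fin.ext_iff]), h.wp 0 j,
    h.wp 1 j, h.wq 0 j, h.wq 1 j]

variable (n k) in
noncomputable def ofMatrix :
    Matrix (Fin 2) (Fin 2) (CliffordWeyl n k) →ₐ[ℂ] CliffordWeyl (n + 2) k :=
  matrixUnitsLift (pauliUnits (ω 0) (ω 1)) (twistedEmbedding n k)
    isPauliPair_ω_zero_one.pauliUnits_mul isPauliPair_ω_zero_one.pauliUnits_sum
    fun i j x => pauliUnits_commute (commute_ω_zero_twistedEmbedding x)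
      (commute_chirality_twistedEmbedding x) i j

@[simp] theorem toMatrix_ω_zero : toMatrix n k (ω 0) = pauliX _ := by simp [toMatrix]

@[simp] theorem toMatrix_ω_one : toMatrix n k (ω 1) = pauliY _ := by simp [toMatrix]

theorem toMatrix_ω_succ_succ (i : Fin n) :
    toMatrix n k (ω i.succ.succ) = chirality (pauliX _) (pauliY _) * scalar (Fin 2) (ω i) := by
  simp only [toMatrix, lift_ω, Fin.cons_succ]

theorem toMatrix_p (j : Fin k) :
    toMatrix n k (p j) = chirality (pauliX _) (pauliY _) * scalar (Fin 2) (p j) :=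
  lift_p _ j

theorem toMatrix_q (j : Fin k) :
    toMatrix n k (q j) = chirality (pauliX _) (pauliY _) * scalar (Fin 2) (q j) :=
  lift_q _ j

theorem toMatrix_chirality :
    toMatrix n k (chirality (ω 0) (ω 1)) = chirality (pauliX _) (pauliY _) := by
  rw [map_chirality, toMatrix_ω_zero, toMatrix_ω_one]

theorem twistedEmbedding_ω (i : Fin n) :
    twistedEmbedding n k (ω i) = chirality (ω 0) (ω 1) * ω i.succ.succ :=
  lift_ω _ i

theorem twistedEmbedding_p (j : Fin k) :
    twistedEmbedding n k (p j) = chirality (ω 0) (ω 1) * p j :=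
  lift_p _ j

theorem twistedEmbedding_q (j : Fin k) :
    twistedEmbedding n k (q j) = chirality (ω 0) (ω 1) * q j :=
  lift_q _ j

theorem toMatrix_comp_twistedEmbedding :
    (toMatrix n k).comp (twistedEmbedding n k) = scalarAlgHom (Fin 2) ℂ := by
  have hγ := (isPauliPair_pauliX_pauliY (CliffordWeyl n k)).chirality_mul_self
  refine algHom_ext (fun i => ?_) (fun j => ?_) (fun j => ?_) <;>
    simp only [AlgHom.comp_apply, twistedEmbedding_ω, twistedEmbedding_p, twistedEmbedding_q,
      map_mul, toMatrix_chirality, toMatrix_ω_succ_succ, toMatrix_p, toMatrix_q, ← mul_assoc, hγ,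
      one_mul, scalarAlgHom_apply]

theorem toMatrix_pauliUnits (i j : Fin 2) :
    toMatrix n k (pauliUnits (ω 0) (ω 1) i j) = single i j 1 := by
  rw [map_pauliUnits, toMatrix_ω_zero, toMatrix_ω_one, pauliUnits_pauliX_pauliY]

theorem toMatrix_ofMatrix (M : Matrix (Fin 2) (Fin 2) (CliffordWeyl n k)) :
    toMatrix n k (ofMatrix n k M) = M := by
  have hsingle (i j : Fin 2) (x : CliffordWeyl n k) :
      single i j 1 * scalar (Fin 2) x = single i j x := by
    ext; simp [mul_diagonal, single_apply]
  conv_rhs => rw [matrix_eq_sum_single M]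
  simp only [ofMatrix, matrixUnitsLift_apply, map_sum, map_mul, toMatrix_pauliUnits,
    ← AlgHom.comp_apply, toMatrix_comp_twistedEmbedding, scalarAlgHom_apply, hsingle]

theorem ofMatrix_single_one (i j : Fin 2) :
    ofMatrix n k (single i j 1) = pauliUnits (ω 0) (ω 1) i j := by
  rw [ofMatrix, matrixUnitsLift_single, map_one, mul_one]

theorem ofMatrix_pauliX : ofMatrix n k (pauliX _) = ω 0 := by
  rw [(isPauliPair_pauliX_pauliY _).eq_pauliUnits_add, map_add, pauliUnits_pauliX_pauliY,
    pauliUnits_pauliX_pauliY, ofMatrix_single_one, ofMatrix_single_one,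
    ← isPauliPair_ω_zero_one.eq_pauliUnits_add]

theorem ofMatrix_pauliY : ofMatrix n k (pauliY _) = ω 1 := by
  rw [(isPauliPair_pauliX_pauliY _).eq_smul_pauliUnits_sub, map_smul, map_sub,
    pauliUnits_pauliX_pauliY, pauliUnits_pauliX_pauliY, ofMatrix_single_one, ofMatrix_single_one,
    ← isPauliPair_ω_zero_one.eq_smul_pauliUnits_sub]

theorem ofMatrix_chirality_mul_scalar (x : CliffordWeyl n k) :
    ofMatrix n k (chirality (pauliX _) (pauliY _) * scalar (Fin 2) x) =
      chirality (ω 0) (ω 1) * twistedEmbedding n k x := by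
  rw [map_mul, map_chirality, ofMatrix_pauliX, ofMatrix_pauliY, ofMatrix, matrixUnitsLift_scalar]

theorem ofMatrix_comp_toMatrix : (ofMatrix n k).comp (toMatrix n k) = AlgHom.id ℂ _ := by
  have hΓ := isPauliPair_ω_zero_one (n := n) (k := k) |>.chirality_mul_self
  refine algHom_ext (fun i => ?_) (fun j => ?_) (fun j => ?_)
  · induction i using Fin.cases with
    | zero => simpa using ofMatrix_pauliX
    | succ i =>
      induction i using Fin.cases with
      | zero => simpa using ofMatrix_pauliY
      | succ i =>
        simp only [AlgHom.comp_apply, toMatrix_ω_succ_succ, ofMatrix_chirality_mul_scalar,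
          twistedEmbedding_ω, ← mul_assoc, hΓ, one_mul, AlgHom.id_apply]
  all_goals
    simp only [AlgHom.comp_apply, toMatrix_p, toMatrix_q, ofMatrix_chirality_mul_scalar,
      twistedEmbedding_p, twistedEmbedding_q, ← mul_assoc, hΓ, one_mul, AlgHom.id_apply]

variable (n k) in
noncomputable def stepEquiv :
    CliffordWeyl (n + 2) k ≃ₐ[ℂ] Matrix (Fin 2) (Fin 2) (CliffordWeyl n k) :=
  AlgEquiv.ofAlgHom (toMatrix n k) (ofMatrix n k) (AlgHom.ext toMatrix_ofMatrix)
    ofMatrix_comp_toMatrix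

end CliffordWeyl

-- Not `Matrix.uniqueAlgEquiv`: its `Fintype`/`DecidableEq` instances come from `Unique` and are
-- not defeq to those of `Fin 1`.
noncomputable def matrixFinOneAlgEquiv (R A : Type*) [CommSemiring R] [Semiring A] [Algebra R A] :
    A ≃ₐ[R] Matrix (Fin 1) (Fin 1) A :=
  AlgEquiv.ofBijective (Matrix.scalarAlgHom (Fin 1) R)
    ⟨fun a b h => by simpa using congrFun₂ h 0 0,
      fun M => ⟨M 0 0, by ext i j; fin_cases i; fin_cases j; rfl⟩⟩

/-- `C(2n, 2k) ≅ Matrix (Fin 2^n) (Fin 2^n) W_{2k}`: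
the even Clifford–Weyl algebra is a matrix algebra over the Weyl algebra. -/
theorem cliffordWeyl_even_matrix (n k : ℕ) :
    Nonempty (CliffordWeyl (2 * n) k ≃ₐ[ℂ]
      Matrix (Fin (2 ^ n)) (Fin (2 ^ n)) (WeylAlg k)) := by
  induction n with
  | zero => exact ⟨(cliffordWeylZeroEquiv k).trans (matrixFinOneAlgEquiv ℂ _)⟩
  | succ n ih =>
    obtain ⟨e⟩ := ih
    exact ⟨(CliffordWeyl.stepEquiv (2 * n) k).trans <| e.mapMatrix.trans <|
      (Matrix.compAlgEquiv _ _ _ ℂ).trans <|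
        Matrix.reindexAlgEquiv ℂ _ (finProdFinEquiv.trans (finCongr (pow_succ' 2 n).symm))⟩
end

section
/- PBW-type basis for A_λ(n): for every λ ∈ ℂ and n ∈ ℕ, the family of elements ω^I E₊^α E₋^β := ω_1^{i_1} ⋯ ω_{2n+1}^{i_{2n+1}} E₊^α E₋^β, indexed by I = (i_1,…,i_{2n+1}) ∈ {0,1}^{2n+1} and α, β ∈ ℕ, is a basis of A_λ(n) as a ℂ-vector space. -/
/-
Spanning: the span of the monomials `ω^I E₊^α E₋^β` contains `1` and is stable under left
multiplication by the generators. The `ω_j` act on the `ω^I` as a Clifford algebra does, up to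
sign; `E₊` and `E₋` anticommute past `ω^I`; and `E₋ E₊^(α+1)` is rewritten, by the ghost relation,
as `E₊^(α+1) E₋` plus multiples of `E₊^α` and `E₊^α Ω`, where `Ω = ω_1 ⋯ ω_{2n+1}` anticommutes
with `E₊`.

Independence: `A_λ(n)` acts on `Cl ⊗ ℂ[[x, y]]`, where `Cl` has basis indexed by `{0,1}^{2n+1}`.
There `ω_j` acts by a Clifford generator (with Jordan–Wigner signs), `E₊` by `P ⊗ x` with `P` the
parity operator, and `E₋` by `P ⊗ (y + ∂ₓ/4) - μ (ΩP) ⊗ K`, where `μ = i^n λ` and `K` is the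
operator `p ↦ (p(x) - p(-x)) / 2x`. Because `xK + Kx = 1` and `Ω` is central in `Cl` and
anticommutes with `P` (the number of generators is odd), the ghost relation holds. The monomial
`ω^I E₊^α E₋^β` sends `e_0 ⊗ 1` to `± e_I ⊗ x^α y^β`, and these vectors are linearly independent.
-/

/-- Generators of the algebra `A_λ(n)`: `ω_1, …, ω_{2n+1}`, `E₊`, `E₋`. -/
inductive AGen (n : ℕ) : Type
  | w : Fin (2 * n + 1) → AGen n
  | Ep : AGen n
  | Em : AGen n

/-- The defining relations of `A_λ(n)`:
`ω_j ω_k + ω_k ω_j = 2δ_{jk}`, `E₊ ω_j = −ω_j E₊`, `E₋ ω_j = −ω_j E₋`, and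
`E₊E₋ − E₋E₊ = −1/4 + i^n λ ω_1 ω_2 ⋯ ω_{2n+1}`. -/
inductive ARel (lam : ℂ) (n : ℕ) :
    FreeAlgebra ℂ (AGen n) → FreeAlgebra ℂ (AGen n) → Prop
  | ww (j k : Fin (2 * n + 1)) : ARel lam n
      (FreeAlgebra.ι ℂ (AGen.w j) * FreeAlgebra.ι ℂ (AGen.w k) +
        FreeAlgebra.ι ℂ (AGen.w k) * FreeAlgebra.ι ℂ (AGen.w j))
      (if j = k then 2 else 0)
  | epw (j : Fin (2 * n + 1)) : ARel lam n
      (FreeAlgebra.ι ℂ AGen.Ep * FreeAlgebra.ι ℂ (AGen.w j))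
      (-(FreeAlgebra.ι ℂ (AGen.w j) * FreeAlgebra.ι ℂ AGen.Ep))
  | emw (j : Fin (2 * n + 1)) : ARel lam n
      (FreeAlgebra.ι ℂ AGen.Em * FreeAlgebra.ι ℂ (AGen.w j))
      (-(FreeAlgebra.ι ℂ (AGen.w j) * FreeAlgebra.ι ℂ AGen.Em))
  | ghost : ARel lam n
      (FreeAlgebra.ι ℂ AGen.Ep * FreeAlgebra.ι ℂ AGen.Em -
        FreeAlgebra.ι ℂ AGen.Em * FreeAlgebra.ι ℂ AGen.Ep)
      (algebraMap ℂ (FreeAlgebra ℂ (AGen n)) (-(1 / 4)) +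
        (Complex.I ^ n * lam) •
          (List.ofFn fun i : Fin (2 * n + 1) => FreeAlgebra.ι ℂ (AGen.w i)).prod)

/-- The algebra `A_λ(n)`, presented by generators and relations. -/
abbrev ALam (lam : ℂ) (n : ℕ) : Type := RingQuot (ARel lam n)

/-- The image of the generator `ω_i` in `A_λ(n)`. -/
noncomputable def ALam.omega (lam : ℂ) (n : ℕ) (i : Fin (2 * n + 1)) : ALam lam n :=
  RingQuot.mkAlgHom ℂ (ARel lam n) (FreeAlgebra.ι ℂ (AGen.w i))

/-- The image of the generator `E₊` in `A_λ(n)`. -/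
noncomputable def ALam.Ep (lam : ℂ) (n : ℕ) : ALam lam n :=
  RingQuot.mkAlgHom ℂ (ARel lam n) (FreeAlgebra.ι ℂ AGen.Ep)

/-- The image of the generator `E₋` in `A_λ(n)`. -/
noncomputable def ALam.Em (lam : ℂ) (n : ℕ) : ALam lam n :=
  RingQuot.mkAlgHom ℂ (ARel lam n) (FreeAlgebra.ι ℂ AGen.Em)

open Finset

section Signs

variable {N : ℕ}

def cliffordSign (J : Fin N → Fin 2) (s : Finset (Fin N)) : ℤˣ :=
  ∏ k ∈ s, (-1) ^ (J k : ℕ)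

lemma neg_one_pow_val_add_one {M : Type*} [Monoid M] [HasDistribNeg M] (x : Fin 2) :
    (-1 : M) ^ ((x + 1 : Fin 2) : ℕ) = -(-1) ^ (x : ℕ) := by
  fin_cases x <;> simp

lemma cliffordSign_add_single (J : Fin N → Fin 2) (j : Fin N) (s : Finset (Fin N)) :
    cliffordSign (J + Pi.single j 1) s = (if j ∈ s then -1 else 1) * cliffordSign J s := by
  have hoff : ∀ k ∈ s, k ≠ j →
      (-1 : ℤˣ) ^ ((J + Pi.single j 1 : Fin N → Fin 2) k : ℕ) = (-1) ^ (J k : ℕ) :=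
    fun k _ hk => by simp [Pi.single_eq_of_ne hk]
  split_ifs with hj
  · rw [cliffordSign, cliffordSign, ← mul_prod_erase s _ hj, ← mul_prod_erase s _ hj,
      prod_congr rfl fun k hk => hoff k (mem_of_mem_erase hk) (ne_of_mem_erase hk)]
    simp [neg_one_pow_val_add_one]
  · rw [one_mul, cliffordSign, cliffordSign]
    exact prod_congr rfl fun k hk => hoff k hk (ne_of_mem_of_not_mem hk hj)

lemma cliffordSign_univ_one : cliffordSign (1 : Fin N → Fin 2) univ = (-1) ^ N := by
  simp [cliffordSign]

lemma add_single_add_single_self (J : Fin N → Fin 2) (j : Fin N) :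
    J + Pi.single j 1 + Pi.single j 1 = J := by
  rw [add_assoc, ← Pi.single_add, show (1 + 1 : Fin 2) = 0 from rfl, Pi.single_zero, add_zero]

end Signs

lemma Int.cast_units_mul_self {R : Type*} [Ring R] (s : ℤˣ) : ((s : ℤ) : R) * (s : ℤ) = 1 := by
  rw [← Int.cast_mul, ← Units.val_mul, Int.units_mul_self, Units.val_one, Int.cast_one]

section Anticommute

variable {A : Type*} [Ring A]

lemma mul_pow_of_mul_eq_neg {x y : A} (h : x * y = -(y * x)) (m : ℕ) :
    x * y ^ m = (-1 : ℤˣ) ^ m • (y ^ m * x) := by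
  induction m with
  | zero => simp
  | succ m ih =>
    rw [pow_succ, ← mul_assoc, ih, smul_mul_assoc, mul_assoc, h, mul_neg, ← mul_assoc, pow_succ,
      mul_smul, Units.neg_smul, one_smul, smul_neg]

lemma pow_mul_of_mul_eq_neg {x y : A} (h : x * y = -(y * x)) (m : ℕ) :
    x ^ m * y = (-1 : ℤˣ) ^ m • (y * x ^ m) := by
  induction m with
  | zero => simp
  | succ m ih =>
    rw [pow_succ', mul_assoc, ih, mul_smul_comm, ← mul_assoc, h, neg_mul, mul_assoc, ← pow_succ',
      pow_succ (-1 : ℤˣ), mul_smul, Units.neg_smul, one_smul, smul_neg]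

lemma mul_prod_ofFn_of_mul_eq_smul {N : ℕ} (f : Fin N → A) (ε : Fin N → ℤˣ) (x : A)
    (h : ∀ k, x * f k = ε k • (f k * x)) :
    x * (List.ofFn f).prod = (∏ k, ε k) • ((List.ofFn f).prod * x) := by
  induction N with
  | zero => simp
  | succ N ih =>
    rw [List.ofFn_succ, List.prod_cons, Fin.prod_univ_succ, ← mul_assoc, h, smul_mul_assoc,
      mul_assoc, ih _ _ fun k => h k.succ, mul_smul_comm, smul_smul, mul_assoc]

end Anticommute

section CliffordFamily

variable {A : Type*} [Ring A]

structure IsCliffordFamily {ι : Type*} (ω : ι → A) : Prop where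
  mul_self : ∀ j, ω j * ω j = 1
  anticomm : ∀ ⦃j k⦄, j ≠ k → ω j * ω k = -(ω k * ω j)

lemma IsCliffordFamily.comp {ι κ : Type*} {ω : ι → A} (h : IsCliffordFamily ω) {f : κ → ι}
    (hf : f.Injective) : IsCliffordFamily (ω ∘ f) :=
  ⟨fun j => h.mul_self (f j), fun _ _ hjk => h.anticomm (hf.ne hjk)⟩

variable {N : ℕ}

def cliffordMonomial (ω : Fin N → A) (I : Fin N → Fin 2) : A :=
  (List.ofFn fun j => ω j ^ (I j : ℕ)).prod

lemma cliffordMonomial_succ (ω : Fin (N + 1) → A) (I : Fin (N + 1) → Fin 2) :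
    cliffordMonomial ω I = ω 0 ^ (I 0 : ℕ) * cliffordMonomial (Fin.tail ω) (Fin.tail I) := by
  rw [cliffordMonomial, List.ofFn_succ, List.prod_cons]
  rfl

lemma cliffordMonomial_zero (ω : Fin N → A) : cliffordMonomial ω 0 = 1 := by
  simp [cliffordMonomial]

lemma cliffordMonomial_one (ω : Fin N → A) : cliffordMonomial ω 1 = (List.ofFn ω).prod := by
  simp [cliffordMonomial]

lemma map_cliffordMonomial {B F : Type*} [Ring B] [FunLike F A B] [MonoidHomClass F A B] (f : F)
    (ω : Fin N → A) (I : Fin N → Fin 2) :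
    f (cliffordMonomial ω I) = cliffordMonomial (f ∘ ω) I := by
  simp [cliffordMonomial, map_list_prod, List.map_ofFn, Function.comp_def]

lemma mul_cliffordMonomial_of_anticomm {ω : Fin N → A} {x : A}
    (hx : ∀ k, x * ω k = -(ω k * x)) (J : Fin N → Fin 2) :
    x * cliffordMonomial ω J = cliffordSign J univ • (cliffordMonomial ω J * x) :=
  mul_prod_ofFn_of_mul_eq_smul _ _ x fun k => mul_pow_of_mul_eq_neg (hx k) _

lemma mul_prod_ofFn_of_anticomm {ω : Fin N → A} {x : A} (hx : ∀ k, x * ω k = -(ω k * x))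
    (hN : Odd N) : x * (List.ofFn ω).prod = -((List.ofFn ω).prod * x) := by
  rw [← cliffordMonomial_one, mul_cliffordMonomial_of_anticomm hx, cliffordSign_univ_one,
    hN.neg_one_pow, Units.neg_smul, one_smul]

lemma mul_pow_fin_two {x : A} (hx : x * x = 1) (a : Fin 2) :
    x * x ^ (a : ℕ) = x ^ ((a + 1 : Fin 2) : ℕ) := by
  fin_cases a
  · simp
  · simpa using hx

lemma exists_cliffordMonomial_smul {X : Type*} [AddCommGroup X] [Module A X] (g : Fin N → A)
    (v : (Fin N → Fin 2) → X) (hg : ∀ j J, ∃ s : ℤˣ, g j • v J = s • v (J + Pi.single j 1))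
    (I J : Fin N → Fin 2) : ∃ s : ℤˣ, cliffordMonomial g I • v J = s • v (J + I) := by
  suffices ∀ l : List (Fin N), ∃ s : ℤˣ, (l.map fun j => g j ^ (I j : ℕ)).prod • v J =
      s • v (J + (l.map fun j => Pi.single j (I j)).sum) by
    obtain ⟨s, hs⟩ := this (List.finRange N)
    refine ⟨s, ?_⟩
    rwa [← List.ofFn_eq_map, ← List.ofFn_eq_map, List.sum_ofFn, Finset.univ_sum_single] at hs
  intro l
  induction l with
  | nil => exact ⟨1, by simp⟩
  | cons j t ih =>
    obtain ⟨s, hs⟩ := ih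
    simp only [List.map_cons, List.prod_cons, List.sum_cons, mul_smul, hs, smul_comm _ s]
    obtain hj | hj : I j = 0 ∨ I j = 1 := by omega
    · exact ⟨s, by simp [hj]⟩
    · obtain ⟨s', hs'⟩ := hg j (J + (t.map fun j => Pi.single j (I j)).sum)
      refine ⟨s' * s, ?_⟩
      rw [hj, Fin.val_one, pow_one, hs', smul_smul, mul_comm s, add_left_comm,
        add_comm _ (Pi.single j 1)]

namespace IsCliffordFamily

variable {ω : Fin N → A}

lemma exists_mul_cliffordMonomial (h : IsCliffordFamily ω) (j : Fin N) (J : Fin N → Fin 2) :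
    ∃ s : ℤˣ, ω j * cliffordMonomial ω J = s • cliffordMonomial ω (J + Pi.single j 1) := by
  induction N with
  | zero => exact j.elim0
  | succ N ih =>
    simp only [cliffordMonomial_succ]
    induction j using Fin.cases with
    | zero =>
      have htail : Fin.tail (J + Pi.single 0 1) = Fin.tail J := by
        funext k
        simp [Fin.tail]
      refine ⟨1, ?_⟩
      rw [one_smul, htail, ← mul_assoc, mul_pow_fin_two (h.mul_self 0)]
      simp
    | succ i =>
      obtain ⟨s, hs⟩ := ih (ω := Fin.tail ω) (h.comp (Fin.succ_injective N)) i (Fin.tail J)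
      have htail : Fin.tail (J + Pi.single i.succ 1) = Fin.tail J + Pi.single i 1 := by
        funext k
        simp [Fin.tail, Pi.single_apply, Fin.succ_inj]
      have hhead : (J + Pi.single i.succ 1 : Fin (N + 1) → Fin 2) 0 = J 0 := by simp
      refine ⟨(-1) ^ (J 0 : ℕ) * s, ?_⟩
      rw [← mul_assoc, mul_pow_of_mul_eq_neg (h.anticomm (Fin.succ_ne_zero i)), smul_mul_assoc,
        mul_assoc, htail, hhead, mul_smul, show ω i.succ = Fin.tail ω i from rfl, hs,
        mul_smul_comm]

lemma exists_cliffordMonomial_mul (h : IsCliffordFamily ω) (I J : Fin N → Fin 2) :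
    ∃ s : ℤˣ, cliffordMonomial ω I * cliffordMonomial ω J = s • cliffordMonomial ω (J + I) :=
  exists_cliffordMonomial_smul ω (cliffordMonomial ω) h.exists_mul_cliffordMonomial I J

lemma commute_prod_ofFn (h : IsCliffordFamily ω) (hN : Odd N) (j : Fin N) :
    Commute (ω j) (List.ofFn ω).prod := by
  have hsign : ∀ k, ω j * ω k = (if k = j then 1 else -1 : ℤˣ) • (ω k * ω j) := by
    intro k
    split_ifs with hk
    · rw [hk, one_smul]
    · rw [h.anticomm (Ne.symm hk), Units.neg_smul, one_smul]
  rw [Commute, SemiconjBy, mul_prod_ofFn_of_mul_eq_smul ω _ _ hsign, prod_ite, prod_const_one,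
    one_mul, prod_const, filter_ne', card_erase_of_mem (mem_univ j), card_univ, Fintype.card_fin,
    (Nat.Odd.sub_odd hN odd_one).neg_one_pow, one_smul]

end IsCliffordFamily

end CliffordFamily

lemma Submodule.eq_top_of_one_mem_of_mul_mem {R A : Type*} [CommSemiring R] [Semiring A]
    [Algebra R A] {s : Set A} (hs : Algebra.adjoin R s = ⊤) {S : Submodule R A} (h1 : 1 ∈ S)
    (hmul : ∀ x ∈ s, ∀ y ∈ S, x * y ∈ S) : S = ⊤ := by
  suffices ∀ x, ∀ y ∈ S, x * y ∈ S from eq_top_iff.mpr fun x _ => by simpa using this x 1 h1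
  intro x
  have hx : x ∈ Algebra.adjoin R s := hs ▸ Algebra.mem_top
  induction hx using Algebra.adjoin_induction with
  | mem x hx => exact hmul x hx
  | algebraMap r => exact fun y hy => by simpa [Algebra.smul_def] using S.smul_mem r hy
  | add x x' _ _ hx hx' => exact fun y hy => by simpa [add_mul] using S.add_mem (hx y hy) (hx' y hy)
  | mul x x' _ _ hx hx' => exact fun y hy => by simpa [mul_assoc] using hx _ (hx' y hy)

namespace ALam

variable (lam : ℂ) (n : ℕ)

@[simp] lemma mkAlgHom_ι_w (j : Fin (2 * n + 1)) :
    RingQuot.mkAlgHom ℂ (ARel lam n) (FreeAlgebra.ι ℂ (AGen.w j)) = omega lam n j := rfl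

@[simp] lemma mkAlgHom_ι_Ep :
    RingQuot.mkAlgHom ℂ (ARel lam n) (FreeAlgebra.ι ℂ AGen.Ep) = Ep lam n := rfl

@[simp] lemma mkAlgHom_ι_Em :
    RingQuot.mkAlgHom ℂ (ARel lam n) (FreeAlgebra.ι ℂ AGen.Em) = Em lam n := rfl

lemma adjoin_generators_eq_top :
    Algebra.adjoin ℂ (Set.range fun g => RingQuot.mkAlgHom ℂ (ARel lam n) (FreeAlgebra.ι ℂ g)) =
      ⊤ := by
  rw [Set.range_comp' (RingQuot.mkAlgHom ℂ (ARel lam n)), ← AlgHom.map_adjoin,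
    FreeAlgebra.adjoin_range_ι, Algebra.map_top, AlgHom.range_eq_top]
  exact RingQuot.mkAlgHom_surjective ℂ (ARel lam n)

lemma omega_isCliffordFamily : IsCliffordFamily (omega lam n) := by
  have hrel (j k : Fin (2 * n + 1)) :=
    RingQuot.mkAlgHom_rel ℂ (ARel.ww (lam := lam) (n := n) j k)
  simp only [map_add, map_mul, apply_ite, map_ofNat, map_zero, mkAlgHom_ι_w] at hrel
  refine ⟨fun j => ?_, fun j k hjk => eq_neg_of_add_eq_zero_left (by simpa [hjk] using hrel j k)⟩
  have h2 : (2 : ℂ) • (omega lam n j * omega lam n j) = (2 : ℂ) • 1 := by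
    rw [two_smul, two_smul, one_add_one_eq_two]
    simpa using hrel j j
  exact smul_right_injective _ two_ne_zero h2

lemma Ep_mul_omega (j : Fin (2 * n + 1)) :
    Ep lam n * omega lam n j = -(omega lam n j * Ep lam n) := by
  simpa using RingQuot.mkAlgHom_rel ℂ (ARel.epw (lam := lam) j)

lemma Em_mul_omega (j : Fin (2 * n + 1)) :
    Em lam n * omega lam n j = -(omega lam n j * Em lam n) := by
  simpa using RingQuot.mkAlgHom_rel ℂ (ARel.emw (lam := lam) j)

lemma Em_mul_Ep : Em lam n * Ep lam n = Ep lam n * Em lam n + (1 / 4 : ℂ) • 1 -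
    (Complex.I ^ n * lam) • cliffordMonomial (omega lam n) 1 := by
  have h := RingQuot.mkAlgHom_rel ℂ (ARel.ghost (lam := lam) (n := n))
  simp only [map_sub, map_mul, map_add, map_smul, map_one, map_list_prod, List.map_ofFn,
    Function.comp_def, mkAlgHom_ι_w, mkAlgHom_ι_Ep, mkAlgHom_ι_Em,
    Algebra.algebraMap_eq_smul_one] at h
  rw [cliffordMonomial_one]
  linear_combination (norm := module) -h

lemma Ep_mul_cliffordMonomial_one : Ep lam n * cliffordMonomial (omega lam n) 1 =
    -(cliffordMonomial (omega lam n) 1 * Ep lam n) := by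
  rw [cliffordMonomial_one]
  exact mul_prod_ofFn_of_anticomm (Ep_mul_omega lam n) (odd_two_mul_add_one n)

lemma exists_Em_mul_Ep_pow_succ (a : ℕ) : ∃ c₁ c₂ : ℂ,
    Em lam n * Ep lam n ^ (a + 1) = Ep lam n ^ (a + 1) * Em lam n + c₁ • Ep lam n ^ a +
      c₂ • (Ep lam n ^ a * cliffordMonomial (omega lam n) 1) := by
  set Ω := cliffordMonomial (omega lam n) 1
  set μ := Complex.I ^ n * lam
  induction a with
  | zero => exact ⟨1 / 4, -μ, by rw [zero_add, pow_one, pow_zero, Em_mul_Ep, one_mul]; module⟩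
  | succ a ih =>
    obtain ⟨c₁, c₂, h⟩ := ih
    have hΩ : Ep lam n ^ a * Ω * Ep lam n = -(Ep lam n ^ (a + 1) * Ω) := by
      rw [mul_assoc, ← neg_eq_iff_eq_neg.mpr (Ep_mul_cliffordMonomial_one lam n), mul_neg,
        ← mul_assoc, ← pow_succ]
    refine ⟨c₁ + 1 / 4, -c₂ - μ, ?_⟩
    calc Em lam n * Ep lam n ^ (a + 1 + 1) = (Em lam n * Ep lam n ^ (a + 1)) * Ep lam n := by
          rw [pow_succ _ (a + 1), mul_assoc]
      _ = Ep lam n ^ (a + 1) * (Em lam n * Ep lam n) + c₁ • Ep lam n ^ (a + 1) +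
            c₂ • (Ep lam n ^ a * Ω * Ep lam n) := by
          rw [h, add_mul, add_mul, smul_mul_assoc, smul_mul_assoc, mul_assoc, ← pow_succ]
      _ = _ := by
          rw [hΩ, Em_mul_Ep, mul_sub, mul_add, mul_smul_comm, mul_smul_comm, mul_one, ← mul_assoc,
            ← pow_succ]
          module

noncomputable def pbwMonomial (p : (Fin (2 * n + 1) → Fin 2) × ℕ × ℕ) : ALam lam n :=
  cliffordMonomial (omega lam n) p.1 * Ep lam n ^ p.2.1 * Em lam n ^ p.2.2

local notation "V" => Submodule.span ℂ (Set.range (pbwMonomial lam n))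

lemma pbwMonomial_mem (p : (Fin (2 * n + 1) → Fin 2) × ℕ × ℕ) : pbwMonomial lam n p ∈ V :=
  Submodule.subset_span ⟨p, rfl⟩

lemma units_smul_pbwMonomial_mem (s : ℤˣ) (p : (Fin (2 * n + 1) → Fin 2) × ℕ × ℕ) :
    s • pbwMonomial lam n p ∈ V :=
  Submodule.smul_of_tower_mem _ s (pbwMonomial_mem lam n p)

lemma omega_mul_pbwMonomial_mem (j : Fin (2 * n + 1)) (p : (Fin (2 * n + 1) → Fin 2) × ℕ × ℕ) :
    omega lam n j * pbwMonomial lam n p ∈ V := by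
  obtain ⟨s, hs⟩ := (omega_isCliffordFamily lam n).exists_mul_cliffordMonomial j p.1
  rw [pbwMonomial, ← mul_assoc, ← mul_assoc, hs, smul_mul_assoc, smul_mul_assoc]
  exact units_smul_pbwMonomial_mem lam n s (p.1 + Pi.single j 1, p.2)

lemma Ep_mul_pbwMonomial_mem (p : (Fin (2 * n + 1) → Fin 2) × ℕ × ℕ) :
    Ep lam n * pbwMonomial lam n p ∈ V := by
  rw [pbwMonomial, ← mul_assoc, ← mul_assoc, mul_cliffordMonomial_of_anticomm (Ep_mul_omega lam n),
    smul_mul_assoc, smul_mul_assoc, mul_assoc _ (Ep lam n), ← pow_succ']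
  exact units_smul_pbwMonomial_mem lam n _ (p.1, p.2.1 + 1, p.2.2)

lemma Em_mul_pbwMonomial_mem (p : (Fin (2 * n + 1) → Fin 2) × ℕ × ℕ) :
    Em lam n * pbwMonomial lam n p ∈ V := by
  obtain ⟨I, a, b⟩ := p
  dsimp only [pbwMonomial]
  rw [← mul_assoc, ← mul_assoc, mul_cliffordMonomial_of_anticomm (Em_mul_omega lam n),
    smul_mul_assoc, smul_mul_assoc, mul_assoc _ (Em lam n)]
  refine Submodule.smul_of_tower_mem _ _ ?_
  rcases a with _ | a
  · rw [pow_zero, mul_one, mul_assoc, ← pow_succ']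
    simpa [pbwMonomial] using pbwMonomial_mem lam n (I, 0, b + 1)
  obtain ⟨c₁, c₂, h⟩ := exists_Em_mul_Ep_pow_succ lam n a
  obtain ⟨s, hs⟩ := (omega_isCliffordFamily lam n).exists_cliffordMonomial_mul I 1
  have hΩ : Ep lam n ^ a * cliffordMonomial (omega lam n) 1 =
      (-1 : ℤˣ) ^ a • (cliffordMonomial (omega lam n) 1 * Ep lam n ^ a) :=
    pow_mul_of_mul_eq_neg (Ep_mul_cliffordMonomial_one lam n) a
  rw [h, hΩ, mul_add, mul_add, add_mul, add_mul, mul_smul_comm, mul_smul_comm, mul_smul_comm,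
    smul_mul_assoc, smul_mul_assoc, smul_mul_assoc,
    ← mul_assoc (cliffordMonomial _ I) (cliffordMonomial _ 1), hs, smul_mul_assoc, smul_mul_assoc,
    ← mul_assoc, mul_assoc _ (Em lam n), ← pow_succ']
  exact add_mem (add_mem (pbwMonomial_mem lam n (I, a + 1, b + 1))
    (Submodule.smul_mem _ _ (pbwMonomial_mem lam n (I, a, b))))
    (Submodule.smul_mem _ _ (Submodule.smul_of_tower_mem _ _
      (units_smul_pbwMonomial_mem lam n s (1 + I, a, b))))

lemma span_pbwMonomial : V = ⊤ := by
  refine Submodule.eq_top_of_one_mem_of_mul_mem (adjoin_generators_eq_top lam n) ?_ ?_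
  · simpa [pbwMonomial, cliffordMonomial_zero] using pbwMonomial_mem lam n (0, 0, 0)
  rintro _ ⟨g, rfl⟩ y hy
  refine (Submodule.span_le (p := Submodule.comap (LinearMap.mulLeft ℂ _) V)).mpr ?_ hy
  rintro _ ⟨p, rfl⟩
  cases g with
  | w j => exact omega_mul_pbwMonomial_mem lam n j p
  | Ep => exact Ep_mul_pbwMonomial_mem lam n p
  | Em => exact Em_mul_pbwMonomial_mem lam n p

end ALam
/-- A type synonym for `ι → ℂ` carrying only the `AddCommGroup` instance, so that
`Module.End ℂ (Coeffs ι)` and its tensor products have a single additive structure for ring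
lemmas to match; on `ι → ℂ` itself, `Pi.addCommMonoid` gets in the way. -/
def Coeffs (ι : Type*) : Type _ := ι → ℂ

namespace Coeffs

variable {ι : Type*}

noncomputable instance : AddCommGroup (Coeffs ι) := Pi.addCommGroup

noncomputable instance : Module ℂ (Coeffs ι) := Pi.module _ _ _

@[ext] lemma ext {f g : Coeffs ι} (h : ∀ i, f i = g i) : f = g := funext h

@[simp] lemma add_apply (f g : Coeffs ι) (i : ι) : (f + g) i = f i + g i := rfl

@[simp] lemma sub_apply (f g : Coeffs ι) (i : ι) : (f - g) i = f i - g i := rfl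

@[simp] lemma neg_apply (f : Coeffs ι) (i : ι) : (-f) i = -f i := rfl

@[simp] lemma zero_apply (i : ι) : (0 : Coeffs ι) i = 0 := rfl

@[simp] lemma zsmul_apply (n : ℤ) (f : Coeffs ι) (i : ι) : (n • f) i = n * f i :=
  zsmul_eq_mul (f i) n

variable [DecidableEq ι]

def single (i : ι) : Coeffs ι := Pi.single i 1

@[simp] lemma single_apply (i j : ι) : single i j = if j = i then 1 else 0 := Pi.single_apply i 1 j

lemma linearIndependent_single : LinearIndependent ℂ (single : ι → Coeffs ι) :=
  Pi.linearIndependent_single_one ι ℂ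

end Coeffs

section WeightedComp

variable {ι : Type*}

noncomputable def weightedComp (w : ι → ℂ) (g : ι → ι) : Module.End ℂ (Coeffs ι) where
  toFun f i := w i * f (g i)
  map_add' f f' := funext fun i => mul_add (w i) (f (g i)) (f' (g i))
  map_smul' c f := funext fun i => mul_left_comm (w i) c (f (g i))

@[simp] lemma weightedComp_apply (w : ι → ℂ) (g : ι → ι) (f : Coeffs ι) (i : ι) :
    weightedComp w g f i = w i * f (g i) := rfl

end WeightedComp

section CliffordModule

variable {N : ℕ}

-- Jordan–Wigner: `ω_j e_J = ± e_{J + δ_j}`, the sign counting the `k < j` with `J k = 1`.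
noncomputable def cliffordOp (j : Fin N) : Module.End ℂ (Coeffs (Fin N → Fin 2)) :=
  weightedComp (fun J => ((cliffordSign J (Iio j) : ℤ) : ℂ)) (· + Pi.single j 1)

noncomputable def parityOp : Module.End ℂ (Coeffs (Fin N → Fin 2)) :=
  weightedComp (fun J => ((cliffordSign J univ : ℤ) : ℂ)) id

lemma cliffordOp_isCliffordFamily : IsCliffordFamily (cliffordOp (N := N)) := by
  refine ⟨fun j => LinearMap.ext fun f => Coeffs.ext fun J => ?_,
    fun j k hjk => LinearMap.ext fun f => Coeffs.ext fun J => ?_⟩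
  · simp only [cliffordOp, Module.End.mul_apply, weightedComp_apply, Module.End.one_apply,
      add_single_add_single_self, cliffordSign_add_single, mem_Iio, lt_irrefl, if_false, one_mul,
      ← mul_assoc, Int.cast_units_mul_self]
  · simp only [cliffordOp, Module.End.mul_apply, LinearMap.neg_apply, Coeffs.neg_apply,
      weightedComp_apply, cliffordSign_add_single, mem_Iio, add_right_comm J (Pi.single j 1)]
    rcases hjk.lt_or_gt with h | h <;> simp only [h, h.not_gt, if_true, if_false] <;> push_cast <;>
      ring

lemma cliffordOp_single (j : Fin N) (J : Fin N → Fin 2) :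
    cliffordOp j (Coeffs.single J) =
      cliffordSign J (Iio j) • Coeffs.single (J + Pi.single j 1) := by
  ext J'
  by_cases hJ' : J' = J + Pi.single j 1
  · subst hJ'
    simp [cliffordOp, add_single_add_single_self, cliffordSign_add_single, Units.smul_def]
  · have : J' + Pi.single j 1 ≠ J := fun h => hJ' (by rw [← h, add_single_add_single_self])
    simp [cliffordOp, Units.smul_def, hJ', this]

lemma parityOp_single_zero : parityOp (Coeffs.single (0 : Fin N → Fin 2)) = Coeffs.single 0 := by
  ext J
  by_cases hJ : J = 0
  · simp [parityOp, hJ, cliffordSign]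
  · simp [parityOp, hJ]

lemma parityOp_mul_cliffordOp (j : Fin N) :
    parityOp * cliffordOp j = -(cliffordOp j * parityOp) := by
  refine LinearMap.ext fun f => Coeffs.ext fun J => ?_
  simp only [cliffordOp, parityOp, Module.End.mul_apply, LinearMap.neg_apply, Coeffs.neg_apply,
    weightedComp_apply, cliffordSign_add_single, mem_univ, if_true, id]
  push_cast
  ring

lemma parityOp_mul_self : parityOp * parityOp = (1 : Module.End ℂ (Coeffs (Fin N → Fin 2))) := by
  refine LinearMap.ext fun f => Coeffs.ext fun J => ?_
  simp only [parityOp, Module.End.mul_apply, weightedComp_apply, Module.End.one_apply, id,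
    ← mul_assoc, Int.cast_units_mul_self, one_mul]

lemma parityOp_mul_prod_cliffordOp (hN : Odd N) :
    parityOp * (List.ofFn (cliffordOp (N := N))).prod = -((List.ofFn cliffordOp).prod * parityOp) :=
  mul_prod_ofFn_of_anticomm parityOp_mul_cliffordOp hN

end CliffordModule

/-! `f : Coeffs (ℕ × ℕ)` stands for the power series `∑ f (a, b) x^a y^b`. -/

section PowerSeries

noncomputable def mulX : Module.End ℂ (Coeffs (ℕ × ℕ)) :=
  weightedComp (fun p => if p.1 = 0 then 0 else 1) fun p => (p.1 - 1, p.2)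

noncomputable def mulY : Module.End ℂ (Coeffs (ℕ × ℕ)) :=
  weightedComp (fun p => if p.2 = 0 then 0 else 1) fun p => (p.1, p.2 - 1)

noncomputable def derivX : Module.End ℂ (Coeffs (ℕ × ℕ)) :=
  weightedComp (fun p => (p.1 + 1 : ℂ)) fun p => (p.1 + 1, p.2)

/-- `p ↦ (p(x) - p(-x)) / 2x`. -/
noncomputable def oddDivX : Module.End ℂ (Coeffs (ℕ × ℕ)) :=
  weightedComp (fun p => (((p.1 + 1) % 2 : ℕ) : ℂ)) fun p => (p.1 + 1, p.2)

lemma mulX_mul_mulY : mulX * mulY = mulY * mulX :=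
  LinearMap.ext fun f => Coeffs.ext fun ⟨a, b⟩ => by
    by_cases ha : a = 0 <;> by_cases hb : b = 0 <;> simp [mulX, mulY, ha, hb]

lemma mulX_mul_derivX : mulX * derivX = derivX * mulX - 1 := by
  refine LinearMap.ext fun f => Coeffs.ext fun ⟨a, b⟩ => ?_
  rcases a with _ | a
  · simp [mulX, derivX]
  · simp only [mulX, derivX, LinearMap.sub_apply, Module.End.mul_apply, Module.End.one_apply,
      Coeffs.sub_apply, weightedComp_apply, Nat.add_sub_cancel, Nat.succ_ne_zero, if_false, one_mul,
      Nat.cast_add, Nat.cast_one]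
    ring

lemma mulX_mul_oddDivX : mulX * oddDivX + oddDivX * mulX = 1 := by
  refine LinearMap.ext fun f => Coeffs.ext fun ⟨a, b⟩ => ?_
  rcases a with _ | a
  · simp [mulX, oddDivX]
  · have hmod : (a + 1) % 2 + (a + 1 + 1) % 2 = 1 := by omega
    simp only [mulX, oddDivX, LinearMap.add_apply, Module.End.mul_apply, Coeffs.add_apply,
      weightedComp_apply, Module.End.one_apply, Nat.add_sub_cancel, Nat.succ_ne_zero, if_false,
      one_mul]
    rw [← add_mul, ← Nat.cast_add, hmod, Nat.cast_one, one_mul]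

lemma mulX_single (a b : ℕ) : mulX (Coeffs.single (a, b)) = Coeffs.single (a + 1, b) := by
  ext ⟨a', b'⟩
  rcases a' with _ | a' <;> simp [mulX]

lemma mulY_single (a b : ℕ) : mulY (Coeffs.single (a, b)) = Coeffs.single (a, b + 1) := by
  ext ⟨a', b'⟩
  rcases b' with _ | b' <;> simp [mulY]

lemma derivX_single_zero (b : ℕ) : derivX (Coeffs.single (0, b)) = 0 := by
  ext ⟨a', b'⟩
  simp [derivX]

lemma oddDivX_single_zero (b : ℕ) : oddDivX (Coeffs.single (0, b)) = 0 := by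
  ext ⟨a', b'⟩
  simp [oddDivX]

end PowerSeries

section Representation

open TensorProduct Algebra.TensorProduct

variable {N : ℕ}

abbrev RepAlgebra (N : ℕ) : Type :=
  Module.End ℂ (Coeffs (Fin N → Fin 2)) ⊗[ℂ] Module.End ℂ (Coeffs (ℕ × ℕ))

noncomputable def repOmega (j : Fin N) : RepAlgebra N := cliffordOp j ⊗ₜ 1

noncomputable def repEp : RepAlgebra N := parityOp ⊗ₜ mulX

noncomputable def repEm (μ : ℂ) : RepAlgebra N :=
  parityOp ⊗ₜ (mulY + (1 / 4 : ℂ) • derivX) -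
    μ • (((List.ofFn cliffordOp).prod * parityOp) ⊗ₜ oddDivX)

lemma repOmega_eq_includeLeft (j : Fin N) :
    repOmega j = includeLeft (S := ℂ) (B := Module.End ℂ (Coeffs (ℕ × ℕ))) (cliffordOp j) :=
  rfl

lemma repOmega_mul_add_mul (j k : Fin N) :
    repOmega j * repOmega k + repOmega k * repOmega j = if j = k then 2 else 0 := by
  simp only [repOmega_eq_includeLeft, ← map_mul, ← map_add]
  split_ifs with h
  · rw [h, cliffordOp_isCliffordFamily.mul_self, one_add_one_eq_two, map_ofNat]
  · rw [cliffordOp_isCliffordFamily.anticomm h, neg_add_cancel, map_zero]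

lemma repEp_mul_repOmega (j : Fin N) : repEp * repOmega j = -(repOmega j * repEp) := by
  simp only [repEp, repOmega, tmul_mul_tmul, mul_one, one_mul, parityOp_mul_cliffordOp, neg_tmul]

lemma repEm_mul_repOmega (hN : Odd N) (μ : ℂ) (j : Fin N) :
    repEm μ * repOmega j = -(repOmega j * repEm μ) := by
  have hΩ : (List.ofFn cliffordOp).prod * parityOp * cliffordOp j =
      -(cliffordOp j * ((List.ofFn cliffordOp).prod * parityOp)) := by
    rw [mul_assoc, parityOp_mul_cliffordOp, mul_neg, ← mul_assoc, ← mul_assoc,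
      ← (cliffordOp_isCliffordFamily.commute_prod_ofFn hN j).eq]
  simp only [repEm, repOmega, sub_mul, mul_sub, smul_mul_assoc, mul_smul_comm,
    tmul_mul_tmul, mul_one, one_mul, parityOp_mul_cliffordOp, hΩ, neg_tmul, smul_neg, neg_sub]
  abel

lemma repEp_mul_repEm_sub (hN : Odd N) (μ : ℂ) :
    repEp * repEm μ - repEm μ * repEp =
      (-(1 / 4) : ℂ) • 1 + μ • (List.ofFn (repOmega (N := N))).prod := by
  have hPΩP : parityOp * ((List.ofFn cliffordOp).prod * parityOp) =
      -(List.ofFn (cliffordOp (N := N))).prod := by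
    rw [← mul_assoc, parityOp_mul_prod_cliffordOp hN, neg_mul, mul_assoc, parityOp_mul_self,
      mul_one]
  have hΩPP : (List.ofFn cliffordOp).prod * parityOp * parityOp =
      (List.ofFn (cliffordOp (N := N))).prod := by
    rw [mul_assoc, parityOp_mul_self, mul_one]
  have hprod : (List.ofFn (repOmega (N := N))).prod = (List.ofFn cliffordOp).prod ⊗ₜ 1 := by
    have hmap : List.ofFn (repOmega (N := N)) =
        (List.ofFn cliffordOp).map (includeLeft (S := ℂ) (B := Module.End ℂ (Coeffs (ℕ × ℕ)))) := by
      rw [List.map_ofFn]; rfl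
    rw [hmap, ← map_list_prod (includeLeft (S := ℂ) (B := Module.End ℂ (Coeffs (ℕ × ℕ)))),
      includeLeft_apply]
  have hdiff : mulX * (mulY + (1 / 4 : ℂ) • derivX) - (mulY + (1 / 4 : ℂ) • derivX) * mulX =
      (-(1 / 4) : ℂ) • 1 := by
    rw [mul_add, add_mul, mul_smul_comm, smul_mul_assoc, mulX_mul_mulY, mulX_mul_derivX]
    module
  calc repEp * repEm μ - repEm μ * repEp
      = 1 ⊗ₜ (mulX * (mulY + (1 / 4 : ℂ) • derivX) - (mulY + (1 / 4 : ℂ) • derivX) * mulX) +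
          μ • ((List.ofFn cliffordOp).prod ⊗ₜ (mulX * oddDivX + oddDivX * mulX)) := by
        simp only [repEp, repEm, sub_mul, mul_sub, smul_mul_assoc, mul_smul_comm, tmul_mul_tmul,
          parityOp_mul_self, hPΩP, hΩPP]
        simp only [tmul_sub, tmul_add, neg_tmul, smul_add, smul_neg]
        abel
    _ = (-(1 / 4) : ℂ) • 1 + μ • (List.ofFn (repOmega (N := N))).prod := by
        rw [hdiff, mulX_mul_oddDivX, hprod, tmul_smul, ← Algebra.TensorProduct.one_def]

end Representation

section Vacuum

open TensorProduct Algebra.TensorProduct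

variable {N : ℕ}

noncomputable abbrev repAct : RepAlgebra N →ₐ[ℂ]
    Module.End ℂ (Coeffs (Fin N → Fin 2) ⊗[ℂ] Coeffs (ℕ × ℕ)) :=
  Module.endTensorEndAlgHom

lemma repAct_tmul (f : Module.End ℂ (Coeffs (Fin N → Fin 2))) (g : Module.End ℂ (Coeffs (ℕ × ℕ)))
    (x : Coeffs (Fin N → Fin 2)) (y : Coeffs (ℕ × ℕ)) :
    repAct (f ⊗ₜ g) (x ⊗ₜ y) = f x ⊗ₜ g y := by
  simp [Module.endTensorEndAlgHom_apply]

lemma repAct_repEm_pow (μ : ℂ) (b : ℕ) :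
    (repAct (repEm μ) ^ b) (Coeffs.single (0 : Fin N → Fin 2) ⊗ₜ Coeffs.single (0, 0)) =
      Coeffs.single 0 ⊗ₜ Coeffs.single (0, b) := by
  induction b with
  | zero => rw [pow_zero, Module.End.one_apply]
  | succ b ih =>
    rw [pow_succ', Module.End.mul_apply, ih, repEm, map_sub, map_smul, LinearMap.sub_apply,
      LinearMap.smul_apply, repAct_tmul, repAct_tmul, oddDivX_single_zero, tmul_zero, smul_zero,
      sub_zero, parityOp_single_zero, LinearMap.add_apply, LinearMap.smul_apply, derivX_single_zero,
      smul_zero, add_zero, mulY_single]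

lemma repAct_repEp_pow (a b : ℕ) :
    (repAct repEp ^ a) (Coeffs.single (0 : Fin N → Fin 2) ⊗ₜ Coeffs.single (0, b)) =
      Coeffs.single 0 ⊗ₜ Coeffs.single (a, b) := by
  induction a with
  | zero => rw [pow_zero, Module.End.one_apply]
  | succ a ih =>
    rw [pow_succ', Module.End.mul_apply, ih, repEp, repAct_tmul, parityOp_single_zero,
      mulX_single]

lemma exists_repAct_cliffordMonomial (I : Fin N → Fin 2) (y : Coeffs (ℕ × ℕ)) :
    ∃ s : ℤˣ, cliffordMonomial (repAct ∘ repOmega) I (Coeffs.single 0 ⊗ₜ y) =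
      s • (Coeffs.single I ⊗ₜ y) := by
  have hω (j : Fin N) (J : Fin N → Fin 2) : (repAct ∘ repOmega) j • (Coeffs.single J ⊗ₜ[ℂ] y) =
      cliffordSign J (Iio j) • (Coeffs.single (J + Pi.single j 1) ⊗ₜ[ℂ] y) := by
    rw [Module.End.smul_def, Function.comp_apply, repOmega, repAct_tmul, cliffordOp_single,
      Module.End.one_apply, Units.smul_def, Units.smul_def, smul_tmul']
  obtain ⟨s, hs⟩ := exists_cliffordMonomial_smul (repAct ∘ repOmega) (Coeffs.single · ⊗ₜ[ℂ] y)
    (fun j J => ⟨_, hω j J⟩) I 0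
  rw [zero_add] at hs
  exact ⟨s, hs⟩

end Vacuum

namespace ALam

open TensorProduct

variable (lam : ℂ) (n : ℕ)

noncomputable def repGenerator : AGen n → RepAlgebra (2 * n + 1)
  | .w j => repOmega j
  | .Ep => repEp
  | .Em => repEm (Complex.I ^ n * lam)

lemma lift_repGenerator_rel ⦃x y : FreeAlgebra ℂ (AGen n)⦄ (h : ARel lam n x y) :
    FreeAlgebra.lift ℂ (repGenerator lam n) x = FreeAlgebra.lift ℂ (repGenerator lam n) y := by
  have hN : Odd (2 * n + 1) := odd_two_mul_add_one n
  set φ := FreeAlgebra.lift ℂ (repGenerator lam n)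
  have hι (g : AGen n) : φ (FreeAlgebra.ι ℂ g) = repGenerator lam n g :=
    FreeAlgebra.lift_ι_apply _ _
  cases h with
  | ww j k =>
    rw [map_add, map_mul, map_mul, hι, hι, repGenerator, repGenerator, repOmega_mul_add_mul]
    split_ifs
    · exact (map_ofNat φ 2).symm
    · exact (map_zero φ).symm
  | epw j => rw [map_mul, map_neg, map_mul, hι, hι]; exact repEp_mul_repOmega j
  | emw j => rw [map_mul, map_neg, map_mul, hι, hι]; exact repEm_mul_repOmega hN _ j
  | ghost =>
    have hprod :
        φ (List.ofFn fun i => FreeAlgebra.ι ℂ (AGen.w i)).prod = (List.ofFn repOmega).prod := by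
      rw [show ⇑φ = ⇑φ.toMonoidHom from rfl, map_list_prod, List.map_ofFn]
      exact congrArg _ (congrArg _ (funext fun i => hι (.w i)))
    rw [map_sub, map_mul, map_mul, map_add, AlgHom.commutes, map_smul, hι, hι, hprod,
      Algebra.algebraMap_eq_smul_one]
    exact repEp_mul_repEm_sub hN _

noncomputable def rep : ALam lam n →ₐ[ℂ] RepAlgebra (2 * n + 1) :=
  RingQuot.liftAlgHom ℂ ⟨FreeAlgebra.lift ℂ (repGenerator lam n), lift_repGenerator_rel lam n⟩

lemma rep_mkAlgHom_ι (g : AGen n) :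
    rep lam n (RingQuot.mkAlgHom ℂ (ARel lam n) (FreeAlgebra.ι ℂ g)) = repGenerator lam n g := by
  rw [rep, RingQuot.liftAlgHom_mkAlgHom_apply, FreeAlgebra.lift_ι_apply]

lemma exists_rep_pbwMonomial_vacuum (p : (Fin (2 * n + 1) → Fin 2) × ℕ × ℕ) :
    ∃ s : ℤˣ, repAct.comp (rep lam n) (pbwMonomial lam n p)
        (Coeffs.single 0 ⊗ₜ Coeffs.single (0, 0)) =
      s • (Coeffs.single p.1 ⊗ₜ Coeffs.single p.2) := by
  obtain ⟨I, a, b⟩ := p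
  obtain ⟨s, hs⟩ := exists_repAct_cliffordMonomial (N := 2 * n + 1) I (Coeffs.single (a, b))
  refine ⟨s, ?_⟩
  have hΩ : repAct.comp (rep lam n) (cliffordMonomial (omega lam n) I) =
      cliffordMonomial (repAct ∘ repOmega) I := by
    rw [map_cliffordMonomial]
    exact congrArg₂ _ (funext fun j => congrArg repAct (rep_mkAlgHom_ι lam n (.w j))) rfl
  have hEp : repAct.comp (rep lam n) (Ep lam n) = repAct repEp :=
    congrArg repAct (rep_mkAlgHom_ι lam n .Ep)
  have hEm : repAct.comp (rep lam n) (Em lam n) = repAct (repEm (Complex.I ^ n * lam)) :=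
    congrArg repAct (rep_mkAlgHom_ι lam n .Em)
  dsimp only [pbwMonomial]
  rw [map_mul, map_mul, map_pow, map_pow, Module.End.mul_apply, Module.End.mul_apply, hΩ, hEp, hEm,
    repAct_repEm_pow, repAct_repEp_pow, hs]

lemma linearIndependent_pbwMonomial : LinearIndependent ℂ (pbwMonomial lam n) := by
  choose s hs using exists_rep_pbwMonomial_vacuum lam n
  let Φ : ALam lam n →ₗ[ℂ] Coeffs (Fin (2 * n + 1) → Fin 2) ⊗[ℂ] Coeffs (ℕ × ℕ) :=
    LinearMap.applyₗ (Coeffs.single 0 ⊗ₜ Coeffs.single (0, 0)) ∘ₗ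
      (repAct.comp (rep lam n)).toLinearMap
  refine LinearIndependent.of_comp Φ ?_
  have hΦ : Φ ∘ pbwMonomial lam n = s • fun p => Coeffs.single p.1 ⊗ₜ Coeffs.single p.2 :=
    funext hs
  rw [hΦ]
  exact (Coeffs.linearIndependent_single.tmul_of_isDomain
    Coeffs.linearIndependent_single).group_smul s

end ALam

/-- PBW-type basis of `A_λ(n)`: the elements
`ω^I E₊^α E₋^β = ω_1^{i_1} ⋯ ω_{2n+1}^{i_{2n+1}} E₊^α E₋^β`, for
`I ∈ {0,1}^{2n+1}` and `α, β ∈ ℕ`, form a ℂ-vector space basis of `A_λ(n)`. -/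
theorem aLam_basis (lam : ℂ) (n : ℕ) :
    ∃ b : Module.Basis ((Fin (2 * n + 1) → Fin 2) × ℕ × ℕ) ℂ (ALam lam n),
      ∀ (I : Fin (2 * n + 1) → Fin 2) (α β : ℕ),
        b (I, α, β) =
          (List.ofFn fun j : Fin (2 * n + 1) =>
              ALam.omega lam n j ^ (I j : ℕ)).prod *
            ALam.Ep lam n ^ α * ALam.Em lam n ^ β := by
  let b := Module.Basis.mk (ALam.linearIndependent_pbwMonomial lam n)
    (ALam.span_pbwMonomial lam n).ge
  exact ⟨b, fun I α β => Module.Basis.mk_apply _ _ (I, α, β)⟩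
end
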